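/- arXiv:2306.17746 — 6 statements merged into one kernel-verified Lean document; each statement's English description precedes it below -/
import Mathlib

section
/- There exists an absolute constant C > 0 such that for every α > 0, every b ∈ L∞(ℝ), and every g ∈ L¹_loc(ℝ) not a.e. zero whose maximal function Mg satisfies log(Mg) ∈ L¹_loc(ℝ), the function f = α·log(Mg) + b satisfies ‖f‖_BLO ≤ C·(α + ‖b‖_{L∞}). -/
open MeasureTheory Filter Set

noncomputable section

/-- Mean value of `f` over the interval `[a,b]`. -/
def intAvg (f : ℝ → ℝ) (a b : ℝ) : ℝ := (b - a)⁻¹ * ∫ x in a..b, f x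

/-- Essential infimum of `f` over the interval `[a,b]`. -/
def essInfIcc (f : ℝ → ℝ) (a b : ℝ) : ℝ :=
  essInf f (volume.restrict (Set.Icc a b))

/-- Lower oscillation of `f` over `[a,b]`: mean minus essential infimum. -/
def lowOsc (f : ℝ → ℝ) (a b : ℝ) : ℝ := intAvg f a b - essInfIcc f a b

/-- The set of lower oscillations of `f` over compact subintervals of `Ω`. -/
def oscSetOn (f : ℝ → ℝ) (Ω : Set ℝ) : Set ℝ :=
  {c | ∃ a b : ℝ, a < b ∧ Set.Icc a b ⊆ Ω ∧ c = lowOsc f a b}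

def oscSet (f : ℝ → ℝ) : Set ℝ := oscSetOn f Set.univ

/-- BLO seminorm relative to `Ω`. -/
def bloNormOn (f : ℝ → ℝ) (Ω : Set ℝ) : ℝ := sSup (oscSetOn f Ω)

/-- The BLO seminorm on ℝ. -/
def bloNorm (f : ℝ → ℝ) : ℝ := sSup (oscSet f)

/-- `f ∈ BLO(ℝ)`. -/
def MemBLO (f : ℝ → ℝ) : Prop :=
  MeasureTheory.LocallyIntegrable f ∧ BddAbove (oscSet f)

/-- `b ∈ L∞(ℝ)`. -/
def MemLinfty (b : ℝ → ℝ) : Prop :=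
  AEStronglyMeasurable b volume ∧ ∃ M : ℝ, ∀ᵐ x ∂volume, |b x| ≤ M

/-- The `L∞` norm of `b`. -/
def linftyNorm (b : ℝ → ℝ) : ℝ :=
  sInf {M : ℝ | 0 ≤ M ∧ ∀ᵐ x ∂volume, |b x| ≤ M}

/-- `b ∈ L∞(Ω)`. -/
def MemLinftyOn (b : ℝ → ℝ) (Ω : Set ℝ) : Prop :=
  AEStronglyMeasurable b (volume.restrict Ω) ∧
    ∃ M : ℝ, ∀ᵐ x ∂volume, x ∈ Ω → |b x| ≤ M

/-- Uncentered Hardy–Littlewood maximal function of `g` (over intervals containing `x`). -/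
def maxFn (g : ℝ → ℝ) (x : ℝ) : ℝ :=
  sSup {c | ∃ a b : ℝ, a < b ∧ x ∈ Set.Icc a b ∧ c = (b - a)⁻¹ * ∫ t in a..b, |g t|}

/-- The Muckenhoupt `A₁` inequality with constant `C` over compact subintervals of `Ω`. -/
def A1BoundOn (w : ℝ → ℝ) (Ω : Set ℝ) (C : ℝ) : Prop :=
  ∀ a b : ℝ, a < b → Set.Icc a b ⊆ Ω → intAvg w a b ≤ C * essInfIcc w a b

/-- `w` belongs to the Muckenhoupt class `A₁` relative to `Ω`. -/
def MemA1On (w : ℝ → ℝ) (Ω : Set ℝ) : Prop :=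
  MeasureTheory.LocallyIntegrableOn w Ω ∧
    (∀ᵐ x ∂volume, x ∈ Ω → 0 ≤ w x) ∧ ∃ C : ℝ, A1BoundOn w Ω C

/-- `w` belongs to the Muckenhoupt class `A₁` on ℝ. -/
def MemA1 (w : ℝ → ℝ) : Prop := MemA1On w Set.univ

/-- The `A₁` constant of a weight `w` on ℝ. -/
def a1Const (w : ℝ → ℝ) : ℝ := sInf {C : ℝ | 0 ≤ C ∧ A1BoundOn w Set.univ C}

/-- `σ(f) = inf {μ > 0 : e^(f/μ) ∈ A₁}`. -/
def sigmaBLO (f : ℝ → ℝ) : ℝ :=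
  sInf {μ : ℝ | 0 < μ ∧ MemA1 fun x => Real.exp (f x / μ)}

/-- Admissible values `α + ‖b‖_∞` for decompositions `f = α log(Mg) + b`. -/
def newNormSet (f : ℝ → ℝ) : Set ℝ :=
  {c | ∃ α : ℝ, 0 < α ∧ ∃ b g : ℝ → ℝ, MemLinfty b ∧ MeasureTheory.LocallyIntegrable g ∧
    (f =ᵐ[volume] fun x => α * Real.log (maxFn g x) + b x) ∧
    c = α + linftyNorm b}

/-- The new norm `‖f‖'_BLO`. -/
def newNorm (f : ℝ → ℝ) : ℝ := sInf (newNormSet f)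

/-- `W_a(f)`: supremum of lower oscillations over intervals of length at most `a`. -/
def Wosc (f : ℝ → ℝ) (a : ℝ) : ℝ :=
  sSup {c | ∃ s t : ℝ, s < t ∧ t - s ≤ a ∧ c = lowOsc f s t}

/-- `f ∈ VLO(ℝ)`. -/
def MemVLO (f : ℝ → ℝ) : Prop :=
  MemBLO f ∧ Filter.Tendsto (Wosc f) (nhdsWithin 0 (Set.Ioi 0)) (nhds 0)

/-- Mean oscillation of `f` over `[a,b]`. -/
def meanOsc (f : ℝ → ℝ) (a b : ℝ) : ℝ :=
  (b - a)⁻¹ * ∫ x in a..b, |f x - intAvg f a b|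

def bmoSet (f : ℝ → ℝ) : Set ℝ := {c | ∃ a b : ℝ, a < b ∧ c = meanOsc f a b}

/-- The BMO seminorm. -/
def bmoNorm (f : ℝ → ℝ) : ℝ := sSup (bmoSet f)

/-- `f ∈ BMO(ℝ)`. -/
def MemBMO (f : ℝ → ℝ) : Prop :=
  MeasureTheory.LocallyIntegrable f ∧ BddAbove (bmoSet f)

/-- supremum of mean oscillations over intervals of length at most `a`. -/
def WoscM (f : ℝ → ℝ) (a : ℝ) : ℝ :=
  sSup {c | ∃ s t : ℝ, s < t ∧ t - s ≤ a ∧ c = meanOsc f s t}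

/-- `f ∈ VMO(ℝ)`. -/
def MemVMO (f : ℝ → ℝ) : Prop :=
  MemBMO f ∧ Filter.Tendsto (WoscM f) (nhdsWithin 0 (Set.Ioi 0)) (nhds 0)

/-!
Fix `I = [s, t]` and split `g` into its part near `I` (on the concentric interval `3I`) and its
far part. Every `x ∈ I` sees the average `A` of `|g|` over `3I`, and an interval meeting `I` and
leaving `3I` is longer than `I`, so `Mg(x)` also dominates a third of the supremum `B` of the far
averages. Hence `Mg ≥ m := max A (B / 3)` on `I`, while on `I` the set `{Mg > 24 m e^τ}` lies in
`{M(near part) > 12 m e^τ}`, of measure at most `|I| e^{-τ}` by the weak `(1,1)` inequality since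
the near part has `L¹` norm `3 |I| A`. Integrating this exponential tail bounds the mean of
`log Mg` over `I` by `log m + 24`, so the lower oscillation of `α log Mg + b` on `I` is at most
`24 α + 2 ‖b‖_∞`.

`maxFn g` takes the junk value `0` where `Mg = ∞`. On `I` this happens either everywhere (when
`B = ∞`) or on a null set, as `M` of the near part is finite a.e.; if `m = 0` then `Mg = 0` on `I`.
In both degenerate cases `f = b` on `I`.
-/

open Topology

def maxFnSet (g : ℝ → ℝ) (x : ℝ) : Set ℝ :=
  {c | ∃ a b : ℝ, a < b ∧ x ∈ Icc a b ∧ c = intAvg (|g ·|) a b}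

lemma maxFn_eq_sSup (g : ℝ → ℝ) (x : ℝ) : maxFn g x = sSup (maxFnSet g x) := rfl

lemma intAvg_abs_nonneg (g : ℝ → ℝ) {a b : ℝ} (hab : a ≤ b) : 0 ≤ intAvg (|g ·|) a b :=
  mul_nonneg (inv_nonneg.2 (sub_nonneg.2 hab))
    (intervalIntegral.integral_nonneg hab fun _ _ => abs_nonneg _)

lemma maxFnSet_nonempty (g : ℝ → ℝ) (x : ℝ) : (maxFnSet g x).Nonempty :=
  ⟨_, x - 1, x + 1, by linarith, ⟨by linarith, by linarith⟩, rfl⟩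

lemma nonneg_of_mem_maxFnSet {g : ℝ → ℝ} {x c : ℝ} (hc : c ∈ maxFnSet g x) : 0 ≤ c := by
  obtain ⟨a, b, hab, -, rfl⟩ := hc
  exact intAvg_abs_nonneg g hab.le

lemma maxFn_nonneg (g : ℝ → ℝ) (x : ℝ) : 0 ≤ maxFn g x := by
  rw [maxFn_eq_sSup]
  exact Real.sSup_nonneg fun _ => nonneg_of_mem_maxFnSet

/-- The superlevel set `{M h > l}`, points where `M h = ∞` included. -/
def maxFnSuperlevel (h : ℝ → ℝ) (l : ℝ) : Set ℝ := {x | ∃ c ∈ maxFnSet h x, l < c}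

lemma mem_maxFnSuperlevel_of_not_bddAbove {h : ℝ → ℝ} {x : ℝ} (hx : ¬BddAbove (maxFnSet h x))
    (l : ℝ) : x ∈ maxFnSuperlevel h l :=
  not_bddAbove_iff.1 hx l

lemma mem_maxFnSuperlevel_of_lt_maxFn {h : ℝ → ℝ} {x l : ℝ} (hx : l < maxFn h x) :
    x ∈ maxFnSuperlevel h l := by
  rw [maxFn_eq_sSup] at hx
  by_cases hb : BddAbove (maxFnSet h x)
  · exact exists_lt_of_lt_csSup (maxFnSet_nonempty h x) hx
  · exact mem_maxFnSuperlevel_of_not_bddAbove hb l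

lemma maxFnSuperlevel_anti {h : ℝ → ℝ} {l l' : ℝ} (hll' : l ≤ l') :
    maxFnSuperlevel h l' ⊆ maxFnSuperlevel h l :=
  fun _ ⟨c, hc, hlc⟩ => ⟨c, hc, hll'.trans_lt hlc⟩

lemma mul_sub_lt_setIntegral_of_lt_intAvg {h : ℝ → ℝ} {a b l : ℝ} (hab : a < b)
    (hl : l < intAvg (|h ·|) a b) : l * (b - a) < ∫ x in Icc a b, |h x| := by
  rw [integral_Icc_eq_integral_Ioc, ← intervalIntegral.integral_of_le hab.le]
  rwa [intAvg, lt_inv_mul_iff₀ (sub_pos.2 hab), mul_comm] at hl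

lemma ofReal_four_mul_sub_le_of_lt_intAvg {h : ℝ → ℝ} (hh : Integrable h) {a b l : ℝ}
    (hl : 0 < l) (hab : a < b) (hla : l < intAvg (|h ·|) a b) :
    ENNReal.ofReal (4 * (b - a)) ≤ ENNReal.ofReal (4 / l) * ∫⁻ x in Icc a b, ‖h x‖ₑ := by
  rw [← ofReal_integral_norm_eq_lintegral_enorm hh.integrableOn,
    ← ENNReal.ofReal_mul (by positivity)]
  refine ENNReal.ofReal_le_ofReal ?_
  simp only [Real.norm_eq_abs]
  rw [div_mul_eq_mul_div, le_div_iff₀ hl]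
  nlinarith [mul_sub_lt_setIntegral_of_lt_intAvg hab hla]

/-- Weak type `(1,1)`, by the Vitali covering lemma. -/
theorem volume_maxFnSuperlevel_le {h : ℝ → ℝ} (hh : Integrable h) {l : ℝ} (hl : 0 < l) :
    volume (maxFnSuperlevel h l) ≤ ENNReal.ofReal (4 * (∫ x, |h x|) / l) := by
  set T := ∫ x, |h x|
  set P : Set (ℝ × ℝ) := {p | p.1 < p.2 ∧ l < intAvg (|h ·|) p.1 p.2}
  have hball : ∀ p : ℝ × ℝ,
      Metric.closedBall ((p.1 + p.2) / 2) ((p.2 - p.1) / 2) = Icc p.1 p.2 := fun p => by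
    rw [Real.closedBall_eq_Icc]; congr 1 <;> ring
  have hT : ∀ p : ℝ × ℝ, ∫ x in Icc p.1 p.2, |h x| ≤ T :=
    fun p => setIntegral_le_integral hh.abs (ae_of_all _ fun _ => abs_nonneg _)
  obtain ⟨u, huP, hdisj, hcover⟩ :=
    Vitali.exists_disjoint_subfamily_covering_enlargement_closedBall P
      (fun p => (p.1 + p.2) / 2) (fun p => (p.2 - p.1) / 2) (T / (2 * l)) (fun p hp => by
        rw [le_div_iff₀ (by positivity)]
        nlinarith [mul_sub_lt_setIntegral_of_lt_intAvg hp.1 hp.2, hT p]) 4 (by norm_num)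
  simp only [hball] at hdisj hcover
  have hu : u.Countable := hdisj.countable_of_nonempty_interior fun p hp => by
    simpa using (huP hp).1
  have hsub : maxFnSuperlevel h l ⊆
      ⋃ p ∈ u, Metric.closedBall ((p.1 + p.2) / 2) (4 * ((p.2 - p.1) / 2)) := by
    rintro x ⟨c, ⟨a, b, hab, hx, rfl⟩, hlc⟩
    obtain ⟨p, hp, hsub⟩ := hcover (a, b) ⟨hab, hlc⟩
    exact mem_biUnion hp (hsub hx)
  have hball4 : ∀ p ∈ u, volume (Metric.closedBall ((p.1 + p.2) / 2) (4 * ((p.2 - p.1) / 2)))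
      ≤ ENNReal.ofReal (4 / l) * ∫⁻ x in Icc p.1 p.2, ‖h x‖ₑ := fun p hp => by
    rw [Real.volume_closedBall, show 2 * (4 * ((p.2 - p.1) / 2)) = 4 * (p.2 - p.1) by ring]
    exact ofReal_four_mul_sub_le_of_lt_intAvg hh hl (huP hp).1 (huP hp).2
  have := hu.to_subtype
  calc volume (maxFnSuperlevel h l)
      ≤ ∑' p : u, volume (Metric.closedBall ((p.1.1 + p.1.2) / 2) (4 * ((p.1.2 - p.1.1) / 2))) :=
        (measure_mono hsub).trans (measure_biUnion_le volume hu _)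
    _ ≤ ∑' p : u, ENNReal.ofReal (4 / l) * ∫⁻ x in Icc p.1.1 p.1.2, ‖h x‖ₑ :=
        ENNReal.tsum_le_tsum fun p => hball4 p p.2
    _ = ENNReal.ofReal (4 / l) * ∫⁻ x in ⋃ p : u, Icc p.1.1 p.1.2, ‖h x‖ₑ := by
        rw [ENNReal.tsum_mul_left, lintegral_iUnion (fun _ => measurableSet_Icc)
          (hdisj.subtype _ _)]
    _ ≤ ENNReal.ofReal (4 / l) * ∫⁻ x, ‖h x‖ₑ := by gcongr; exact Measure.restrict_le_self
    _ = ENNReal.ofReal (4 * T / l) := by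
        rw [← ofReal_integral_norm_eq_lintegral_enorm hh, ← ENNReal.ofReal_mul (by positivity)]
        simp only [Real.norm_eq_abs, T]
        ring_nf


theorem ae_bddAbove_maxFnSet {h : ℝ → ℝ} (hh : Integrable h) :
    ∀ᵐ x, BddAbove (maxFnSet h x) := by
  have htend : Tendsto (fun l : ℝ => ENNReal.ofReal (4 * (∫ x, |h x|) / l)) atTop (𝓝 0) := by
    simpa using ENNReal.tendsto_ofReal (tendsto_const_nhds.div_atTop tendsto_id)
  refine ae_iff.2 (le_antisymm (ge_of_tendsto htend ?_) bot_le)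
  filter_upwards [eventually_gt_atTop 0] with l hl
  exact (measure_mono fun x hx => mem_maxFnSuperlevel_of_not_bddAbove hx l).trans
    (volume_maxFnSuperlevel_le hh hl)

lemma linftyNorm_nonneg (b : ℝ → ℝ) : 0 ≤ linftyNorm b :=
  Real.sInf_nonneg fun _ hM => hM.1

lemma MemLinfty.ae_abs_le {b : ℝ → ℝ} (hb : MemLinfty b) : ∀ᵐ x, |b x| ≤ linftyNorm b := by
  obtain ⟨-, M, hM⟩ := hb
  have hne : {M : ℝ | 0 ≤ M ∧ ∀ᵐ x, |b x| ≤ M}.Nonempty :=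
    ⟨max M 0, le_max_right _ _, hM.mono fun x hx => hx.trans (le_max_left _ _)⟩
  have hgt : ∀ n : ℕ, ∀ᵐ x, |b x| ≤ linftyNorm b + 1 / (n + 1) := fun n => by
    obtain ⟨M', hM', hlt⟩ :=
      exists_lt_of_csInf_lt hne (lt_add_of_pos_right _ Nat.one_div_pos_of_nat)
    exact hM'.2.mono fun x hx => hx.trans hlt.le
  filter_upwards [ae_all_iff.2 hgt] with x hx
  have hlim : Tendsto (fun n : ℕ => linftyNorm b + 1 / ((n : ℝ) + 1)) atTop (𝓝 (linftyNorm b)) := by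
    simpa using (tendsto_one_div_add_atTop_nhds_zero_nat (𝕜 := ℝ)).const_add (linftyNorm b)
  exact ge_of_tendsto' hlim hx

lemma MemLinfty.locallyIntegrable {b : ℝ → ℝ} (hb : MemLinfty b) : LocallyIntegrable b :=
  (memLp_top_of_bound hb.1 _ hb.ae_abs_le).locallyIntegrable le_top

lemma isCoboundedUnder_ge_ae {α : Type*} [MeasurableSpace α] {μ : Measure α} (hμ : μ ≠ 0)
    (f : α → ℝ) : IsCoboundedUnder (· ≥ ·) (ae μ) f := by
  obtain ⟨n, hn⟩ : ∃ n : ℕ, μ {x | f x ≤ n} ≠ 0 := by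
    by_contra! h
    exact hμ <| Measure.measure_univ_eq_zero.1 <| measure_mono_null
      (fun x _ => mem_iUnion.2 (exists_nat_ge (f x))) (measure_iUnion_null h)
  exact IsCoboundedUnder.of_frequently_le (frequently_ae_iff.2 hn)

lemma le_essInfIcc {f : ℝ → ℝ} {a b c : ℝ} (hab : a < b)
    (h : ∀ᵐ x ∂volume.restrict (Icc a b), c ≤ f x) : c ≤ essInfIcc f a b :=
  le_essInf_of_ae_le c h <| isCoboundedUnder_ge_ae (by simp [hab.not_ge]) f

lemma intAvg_le_of_ae_le {f : ℝ → ℝ} {a b M : ℝ} (hab : a < b)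
    (hf : IntervalIntegrable f volume a b) (h : ∀ᵐ x, f x ≤ M) : intAvg f a b ≤ M := by
  rw [intAvg, inv_mul_le_iff₀ (sub_pos.2 hab)]
  calc ∫ x in a..b, f x ≤ ∫ _ in a..b, M :=
        intervalIntegral.integral_mono_ae hab.le hf intervalIntegrable_const h
    _ = (b - a) * M := by simp

/-- The lower-oscillation bound `φ_I - ess inf_I φ ≤ K` on `I = [s, t]`, phrased without the
essential infimum. -/
def LowOscLE (φ : ℝ → ℝ) (s t K : ℝ) : Prop :=
  ∃ c, (∀ᵐ x ∂volume.restrict (Icc s t), c ≤ φ x) ∧ intAvg φ s t ≤ c + K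

lemma LowOscLE.lowOsc_mul_add_le {φ w : ℝ → ℝ} {s t K α : ℝ} (h : LowOscLE φ s t K)
    (hst : s < t) (hα : 0 ≤ α) (hφ : IntervalIntegrable φ volume s t) (hw : MemLinfty w) :
    lowOsc (fun x => α * φ x + w x) s t ≤ α * K + 2 * linftyNorm w := by
  obtain ⟨c, hlow, havg⟩ := h
  have hwN := hw.ae_abs_le
  have hwI : IntervalIntegrable w volume s t :=
    (hw.locallyIntegrable.integrableOn_isCompact isCompact_uIcc).intervalIntegrable
  have hwavg : intAvg w s t ≤ linftyNorm w :=
    intAvg_le_of_ae_le hst hwI (hwN.mono fun x hx => (le_abs_self _).trans hx)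
  have hsplit : intAvg (fun x => α * φ x + w x) s t = α * intAvg φ s t + intAvg w s t := by
    simp only [intAvg, intervalIntegral.integral_add (hφ.const_mul α) hwI,
      intervalIntegral.integral_const_mul]
    ring
  have hinf : α * c - linftyNorm w ≤ essInfIcc (fun x => α * φ x + w x) s t := by
    refine le_essInfIcc hst ?_
    filter_upwards [hlow, ae_restrict_of_ae hwN] with x hx hwx
    nlinarith [neg_abs_le (w x), mul_le_mul_of_nonneg_left hx hα]
  rw [lowOsc, hsplit]
  nlinarith [mul_le_mul_of_nonneg_left havg hα]

lemma lowOscLE_of_eqOn_zero {φ : ℝ → ℝ} {s t K : ℝ} (hst : s ≤ t) (hK : 0 ≤ K)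
    (h : EqOn φ 0 (Icc s t)) : LowOscLE φ s t K := by
  refine ⟨0, (ae_restrict_mem measurableSet_Icc).mono fun x hx => (h hx).ge, ?_⟩
  rw [intAvg, intervalIntegral.integral_congr (g := 0) (by rwa [uIcc_of_le hst])]
  simpa using hK

lemma integral_le_of_measureReal_lt_le_exp {α : Type*} [MeasurableSpace α] {μ : Measure α}
    {U : α → ℝ} (hU : Integrable U μ) (h0 : 0 ≤ᵐ[μ] U) {K : ℝ}
    (htail : ∀ τ > 0, μ.real {x | τ < U x} ≤ K * Real.exp (-τ)) : ∫ x, U x ∂μ ≤ K := by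
  have hexp : IntegrableOn (fun τ => Real.exp (-τ)) (Ioi 0) := by
    simpa using exp_neg_integrableOn_Ioi 0 one_pos
  rw [hU.integral_eq_integral_meas_lt h0]
  calc ∫ τ in Ioi 0, μ.real {x | τ < U x} ≤ ∫ τ in Ioi 0, K * Real.exp (-τ) :=
        integral_mono_of_nonneg (ae_of_all _ fun _ => measureReal_nonneg) (hexp.const_mul K)
          ((ae_restrict_mem measurableSet_Ioi).mono htail)
    _ = K := by rw [integral_const_mul, integral_exp_neg_Ioi, neg_zero, Real.exp_zero, mul_one]

lemma intAvg_le_of_volume_lt_le_exp {φ : ℝ → ℝ} {s t c : ℝ} (hst : s < t)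
    (hφ : IntegrableOn φ (Ioc s t))
    (htail : ∀ τ > 0, volume ({x | c + τ < φ x} ∩ Ioc s t) ≤
      ENNReal.ofReal ((t - s) * Real.exp (-τ))) :
    intAvg φ s t ≤ c + 1 := by
  set U := fun x => max (φ x - c) 0
  have hU : IntegrableOn U (Ioc s t) := (hφ.sub (integrable_const c)).pos_part
  have hUK : ∫ x in Ioc s t, U x ≤ t - s := by
    refine integral_le_of_measureReal_lt_le_exp hU (ae_of_all _ fun _ => le_max_right _ _)
      fun τ hτ => ?_
    rw [measureReal_def, Measure.restrict_apply' measurableSet_Ioc]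
    refine ENNReal.toReal_le_of_le_ofReal (by positivity) ((measure_mono ?_).trans (htail τ hτ))
    intro x ⟨hx, hxI⟩
    refine ⟨?_, hxI⟩
    simp only [mem_ofPred_eq, U, lt_max_iff] at hx ⊢
    rcases hx with hx | hx <;> linarith
  rw [intAvg, inv_mul_le_iff₀ (sub_pos.2 hst), intervalIntegral.integral_of_le hst.le]
  calc ∫ x in Ioc s t, φ x ≤ ∫ x in Ioc s t, (c + U x) :=
        integral_mono hφ ((integrable_const c).add hU) fun x => by
          simp only [U]
          linarith [le_max_left (φ x - c) 0]
    _ = (t - s) * c + ∫ x in Ioc s t, U x := by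
        rw [integral_add (integrable_const c) hU, setIntegral_const, smul_eq_mul,
          Real.volume_real_Ioc_of_le hst.le]
    _ ≤ (t - s) * (c + 1) := by linarith

lemma exists_add_of_mem_maxFnSet {g : ℝ → ℝ} (hg : LocallyIntegrable g) {S : Set ℝ}
    (hS : MeasurableSet S) {x c : ℝ} (hc : c ∈ maxFnSet g x) :
    ∃ c₁ ∈ maxFnSet (S.indicator g) x, ∃ c₂ ∈ maxFnSet (Sᶜ.indicator g) x, c = c₁ + c₂ := by
  obtain ⟨a, b, hab, hx, rfl⟩ := hc
  refine ⟨_, ⟨a, b, hab, hx, rfl⟩, _, ⟨a, b, hab, hx, rfl⟩, ?_⟩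
  have hII : ∀ {u : ℝ → ℝ}, LocallyIntegrable u → IntervalIntegrable (|u ·|) volume a b :=
    fun hu => (hu.integrableOn_isCompact isCompact_uIcc).intervalIntegrable.abs
  rw [intAvg, intAvg, intAvg, ← mul_add, ← intervalIntegral.integral_add
    (hII (hg.indicator hS)) (hII (hg.indicator hS.compl))]
  congr 1
  refine intervalIntegral.integral_congr fun y _ => ?_
  by_cases hy : y ∈ S <;> simp [hy]

def tripleIcc (s t : ℝ) : Set ℝ := Icc (2 * s - t) (2 * t - s)

def nearPart (g : ℝ → ℝ) (s t : ℝ) : ℝ → ℝ := (tripleIcc s t).indicator g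

def farPart (g : ℝ → ℝ) (s t : ℝ) : ℝ → ℝ := (tripleIcc s t)ᶜ.indicator g

def farAvgs (g : ℝ → ℝ) (s t : ℝ) : Set ℝ := ⋃ y ∈ Icc s t, maxFnSet (farPart g s t) y

section NearFar

variable {g : ℝ → ℝ} {s t x : ℝ}

lemma integrable_nearPart (hg : LocallyIntegrable g) : Integrable (nearPart g s t) :=
  (hg.integrableOn_isCompact isCompact_Icc).integrable_indicator measurableSet_Icc

lemma integral_abs_nearPart (hst : s < t) :
    ∫ x, |nearPart g s t x| = 3 * (t - s) * intAvg (|g ·|) (2 * s - t) (2 * t - s) := by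
  have habs : (fun x => |nearPart g s t x|) = (tripleIcc s t).indicator (|g ·|) := by
    ext x
    by_cases hx : x ∈ tripleIcc s t <;> simp [nearPart, hx]
  rw [habs, tripleIcc, integral_indicator measurableSet_Icc, integral_Icc_eq_integral_Ioc,
    ← intervalIntegral.integral_of_le (by linarith), intAvg,
    show 2 * t - s - (2 * s - t) = 3 * (t - s) by ring, ← mul_assoc,
    mul_inv_cancel₀ (by linarith), one_mul]

lemma intAvg_abs_tripleIcc_mem_maxFnSet (hst : s < t) (hx : x ∈ Icc s t) :
    intAvg (|g ·|) (2 * s - t) (2 * t - s) ∈ maxFnSet g x :=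
  ⟨_, _, by linarith, ⟨by linarith [hx.1], by linarith [hx.2]⟩, rfl⟩

/-- An interval meeting `[s, t]` and leaving `tripleIcc s t` is longer than `t - s`, so enlarging
it by `t - s` on both sides reaches every point of `[s, t]` at the cost of a factor 3. -/
lemma exists_mem_maxFnSet_le_three_mul (hg : LocallyIntegrable g) (hst : s < t) {c : ℝ}
    (hc : c ∈ farAvgs g s t) (hx : x ∈ Icc s t) : ∃ d ∈ maxFnSet g x, c ≤ 3 * d := by
  simp only [farAvgs, mem_iUnion₂] at hc
  obtain ⟨y, hy, a, b, hab, hya, rfl⟩ := hc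
  by_cases hJ : 2 * s - t ≤ a ∧ b ≤ 2 * t - s
  · refine ⟨_, intAvg_abs_tripleIcc_mem_maxFnSet hst hx, ?_⟩
    have hzero : ∫ u in a..b, |farPart g s t u| = 0 := by
      rw [intervalIntegral.integral_congr (g := fun _ => 0), intervalIntegral.integral_zero]
      intro u hu
      rw [uIcc_of_le hab.le] at hu
      have hu3 : u ∈ tripleIcc s t := ⟨by linarith [hu.1], by linarith [hu.2]⟩
      simp [farPart, hu3]
    rw [intAvg, hzero, mul_zero]
    linarith [intAvg_abs_nonneg g (show 2 * s - t ≤ 2 * t - s by linarith)]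
  have hlong : t - s ≤ b - a := by
    rw [not_and_or, not_le, not_le] at hJ
    rcases hJ with h | h <;> linarith [hya.1, hya.2, hy.1, hy.2]
  set a' := a - (t - s) with ha'
  set b' := b + (t - s) with hb'
  refine ⟨intAvg (|g ·|) a' b',
    ⟨a', b', by linarith, ⟨by linarith [hya.1, hy.2, hx.1], by linarith [hya.2, hy.1, hx.2]⟩, rfl⟩,
    ?_⟩
  have hII : ∀ {u : ℝ → ℝ}, LocallyIntegrable u → ∀ p q : ℝ,
      IntervalIntegrable (|u ·|) volume p q :=
    fun hu p q => (hu.integrableOn_isCompact isCompact_uIcc).intervalIntegrable.abs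
  have hint : ∫ u in a..b, |farPart g s t u| ≤ ∫ u in a'..b', |g u| :=
    (intervalIntegral.integral_mono_on hab.le (hII (hg.indicator measurableSet_Icc.compl) a b)
      (hII hg a b) fun u _ => by simpa using norm_indicator_le_norm_self g u).trans
    (intervalIntegral.integral_mono_interval (by linarith) hab.le (by linarith)
      (ae_of_all _ fun _ => abs_nonneg _) (hII hg a' b'))
  have hlen : (b - a)⁻¹ ≤ 3 * (b' - a')⁻¹ := by
    rw [← div_eq_mul_inv, inv_eq_one_div, div_le_div_iff₀ (by linarith) (by linarith)]
    linarith
  calc intAvg (|farPart g s t ·|) a b ≤ (b - a)⁻¹ * ∫ u in a'..b', |g u| :=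
        mul_le_mul_of_nonneg_left hint (inv_nonneg.2 (sub_nonneg.2 hab.le))
    _ ≤ 3 * (b' - a')⁻¹ * ∫ u in a'..b', |g u| :=
        mul_le_mul_of_nonneg_right hlen
          (intervalIntegral.integral_nonneg (by linarith) fun _ _ => abs_nonneg _)
    _ = 3 * intAvg (|g ·|) a' b' := by rw [intAvg, mul_assoc]

lemma farAvgs_nonempty (hst : s ≤ t) : (farAvgs g s t).Nonempty :=
  let ⟨c, hc⟩ := maxFnSet_nonempty (farPart g s t) s
  ⟨c, mem_biUnion (left_mem_Icc.2 hst) hc⟩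

lemma not_bddAbove_maxFnSet_of_not_bddAbove_farAvgs (hg : LocallyIntegrable g) (hst : s < t)
    (hF : ¬BddAbove (farAvgs g s t)) (hx : x ∈ Icc s t) : ¬BddAbove (maxFnSet g x) := by
  rintro ⟨M, hM⟩
  refine hF ⟨3 * M, fun c hc => ?_⟩
  obtain ⟨d, hd, hcd⟩ := exists_mem_maxFnSet_le_three_mul hg hst hc hx
  linarith [hM hd]

lemma max_le_maxFn (hg : LocallyIntegrable g) (hst : s < t) (hx : x ∈ Icc s t)
    (hb : BddAbove (maxFnSet g x)) :
    max (intAvg (|g ·|) (2 * s - t) (2 * t - s)) (sSup (farAvgs g s t) / 3) ≤ maxFn g x := by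
  refine max_le (le_csSup hb (intAvg_abs_tripleIcc_mem_maxFnSet hst hx)) ?_
  suffices sSup (farAvgs g s t) ≤ 3 * maxFn g x by linarith
  refine csSup_le (farAvgs_nonempty hst.le) fun c hc => ?_
  obtain ⟨d, hd, hcd⟩ := exists_mem_maxFnSet_le_three_mul hg hst hc hx
  have hd' : d ≤ maxFn g x := le_csSup hb hd
  linarith

lemma exists_mem_maxFnSet_nearPart_le_add (hg : LocallyIntegrable g)
    (hF : BddAbove (farAvgs g s t)) (hx : x ∈ Icc s t) {c : ℝ} (hc : c ∈ maxFnSet g x) :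
    ∃ c₁ ∈ maxFnSet (nearPart g s t) x, c ≤ c₁ + sSup (farAvgs g s t) := by
  obtain ⟨c₁, hc₁, c₂, hc₂, rfl⟩ := exists_add_of_mem_maxFnSet hg measurableSet_Icc hc
  exact ⟨c₁, hc₁, add_le_add le_rfl (le_csSup hF (mem_biUnion hx hc₂))⟩

end NearFar

section LogMaxFn

variable {g : ℝ → ℝ} {s t : ℝ}

lemma maxFn_eq_zero_of_near_far_eq_zero (hg : LocallyIntegrable g) (hst : s < t)
    (hF : BddAbove (farAvgs g s t)) (hA : intAvg (|g ·|) (2 * s - t) (2 * t - s) = 0)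
    (hB : sSup (farAvgs g s t) = 0) {x : ℝ} (hx : x ∈ Icc s t) : maxFn g x = 0 := by
  refine le_antisymm (Real.sSup_le (fun c hc => ?_) le_rfl) (maxFn_nonneg g x)
  obtain ⟨_, ⟨a, b, hab, -, rfl⟩, hc⟩ := exists_mem_maxFnSet_nearPart_le_add hg hF hx hc
  have hnear : ∫ u in a..b, |nearPart g s t u| ≤ 0 := by
    rw [intervalIntegral.integral_of_le hab.le, ← mul_zero (3 * (t - s)), ← hA,
      ← integral_abs_nearPart hst]
    exact setIntegral_le_integral (integrable_nearPart hg).abs (ae_of_all _ fun _ => abs_nonneg _)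
  have : intAvg (|nearPart g s t ·|) a b ≤ 0 :=
    mul_nonpos_of_nonneg_of_nonpos (inv_nonneg.2 (sub_nonneg.2 hab.le)) hnear
  linarith

lemma volume_log_maxFn_gt_le (hg : LocallyIntegrable g) (hst : s < t)
    (hF : BddAbove (farAvgs g s t)) {m : ℝ} (hm : 0 < m)
    (hA : intAvg (|g ·|) (2 * s - t) (2 * t - s) ≤ m) (hB : sSup (farAvgs g s t) ≤ 3 * m)
    (hlow : ∀ x ∈ Icc s t, BddAbove (maxFnSet g x) → m ≤ maxFn g x) {τ : ℝ} (hτ : 0 < τ) :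
    volume ({x | Real.log (24 * m) + τ < Real.log (maxFn g x)} ∩ Ioc s t) ≤
      ENNReal.ofReal ((t - s) * Real.exp (-τ)) := by
  have hexp : 1 ≤ Real.exp τ := Real.one_le_exp hτ.le
  have hsub : {x | Real.log (24 * m) + τ < Real.log (maxFn g x)} ∩ Ioc s t ⊆
      maxFnSuperlevel (nearPart g s t) (12 * m * Real.exp τ) := by
    rintro x ⟨hxlog, hxI⟩
    have hx : x ∈ Icc s t := Ioc_subset_Icc_self hxI
    suffices hl : x ∈ maxFnSuperlevel g (12 * m * Real.exp τ + sSup (farAvgs g s t)) by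
      obtain ⟨c, hc, hlc⟩ := hl
      obtain ⟨c₁, hc₁, hcc₁⟩ := exists_mem_maxFnSet_nearPart_le_add hg hF hx hc
      exact ⟨c₁, hc₁, by linarith⟩
    by_cases hb : BddAbove (maxFnSet g x)
    · refine maxFnSuperlevel_anti (l' := 24 * m * Real.exp τ) (by nlinarith)
        (mem_maxFnSuperlevel_of_lt_maxFn ?_)
      rwa [← Real.log_lt_log_iff (by positivity) (hm.trans_le (hlow x hx hb)),
        Real.log_mul (by positivity) (Real.exp_pos τ).ne', Real.log_exp]
    · exact mem_maxFnSuperlevel_of_not_bddAbove hb _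
  refine (measure_mono hsub).trans ((volume_maxFnSuperlevel_le (integrable_nearPart hg)
    (by positivity)).trans (ENNReal.ofReal_le_ofReal ?_))
  rw [integral_abs_nearPart hst, div_le_iff₀ (by positivity), Real.exp_neg]
  have : (t - s) * (Real.exp τ)⁻¹ * (12 * m * Real.exp τ) = 12 * (t - s) * m := by
    field_simp
  rw [this]
  nlinarith

theorem lowOscLE_log_maxFn (hg : LocallyIntegrable g)
    (hlog : LocallyIntegrable fun x => Real.log (maxFn g x)) (hst : s < t) :
    LowOscLE (fun x => Real.log (maxFn g x)) s t 24 := by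
  have hzero : (∀ x ∈ Icc s t, maxFn g x = 0) → LowOscLE (fun x => Real.log (maxFn g x)) s t 24 :=
    fun h => lowOscLE_of_eqOn_zero hst.le (by norm_num) fun x hx => by simp [h x hx]
  by_cases hF : BddAbove (farAvgs g s t)
  swap
  · exact hzero fun x hx => Real.sSup_of_not_bddAbove
      (not_bddAbove_maxFnSet_of_not_bddAbove_farAvgs hg hst hF hx)
  set A := intAvg (|g ·|) (2 * s - t) (2 * t - s)
  set B := sSup (farAvgs g s t)
  have hA : 0 ≤ A := intAvg_abs_nonneg g (by linarith)
  have hB : 0 ≤ B := Real.sSup_nonneg fun c hc => by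
    obtain ⟨y, -, hc⟩ := mem_iUnion₂.1 hc
    exact nonneg_of_mem_maxFnSet hc
  set m := max A (B / 3)
  rcases (hA.trans (le_max_left A (B / 3))).eq_or_lt with hm | hm
  · exact hzero fun x hx => maxFn_eq_zero_of_near_far_eq_zero hg hst hF
      (le_antisymm (hm ▸ le_max_left _ _) hA) (by linarith [hm ▸ le_max_right A (B / 3)]) hx
  have hlow : ∀ x ∈ Icc s t, BddAbove (maxFnSet g x) → m ≤ maxFn g x :=
    fun x hx hb => max_le_maxFn hg hst hx hb
  have hnear : ∀ᵐ x, BddAbove (maxFnSet (nearPart g s t) x) :=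
    ae_bddAbove_maxFnSet (integrable_nearPart hg)
  have hae : ∀ᵐ x ∂volume.restrict (Icc s t), m ≤ maxFn g x := by
    filter_upwards [ae_restrict_of_ae hnear, ae_restrict_mem measurableSet_Icc]
      with x ⟨M, hM⟩ hx
    refine hlow x hx ⟨M + B, fun c hc => ?_⟩
    obtain ⟨c₁, hc₁, hcc₁⟩ := exists_mem_maxFnSet_nearPart_le_add hg hF hx hc
    linarith [hM hc₁]
  refine ⟨Real.log m, hae.mono fun x hx => Real.log_le_log hm hx, ?_⟩
  calc intAvg (fun x => Real.log (maxFn g x)) s t ≤ Real.log (24 * m) + 1 :=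
        intAvg_le_of_volume_lt_le_exp hst
          ((hlog.integrableOn_isCompact isCompact_Icc).mono_set Ioc_subset_Icc_self)
          fun τ hτ => volume_log_maxFn_gt_le hg hst hF hm (le_max_left _ _)
            (by linarith [le_max_right A (B / 3)]) hlow hτ
    _ ≤ Real.log m + 24 := by
        rw [Real.log_mul (by norm_num) hm.ne']
        linarith [Real.log_le_sub_one_of_pos (show (0 : ℝ) < 24 by norm_num)]

end LogMaxFn

/-- there is an absolute constant `C > 0` such that for every `α > 0`,
`b ∈ L∞(ℝ)` and `g ∈ L¹_loc(ℝ)` not a.e. zero with `log(Mg) ∈ L¹_loc(ℝ)`, the function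
`f = α·log(Mg) + b` satisfies `‖f‖_BLO ≤ C·(α + ‖b‖_∞)`. -/
theorem bloNorm_of_log_maxFn_add_bounded :
    ∃ C : ℝ, 0 < C ∧
      ∀ α : ℝ, 0 < α → ∀ b g : ℝ → ℝ, MemLinfty b →
        MeasureTheory.LocallyIntegrable g → ¬ (g =ᵐ[volume] 0) →
        MeasureTheory.LocallyIntegrable (fun x => Real.log (maxFn g x)) →
        MemBLO (fun x => α * Real.log (maxFn g x) + b x) ∧
        bloNorm (fun x => α * Real.log (maxFn g x) + b x) ≤ C * (α + linftyNorm b) := by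
  refine ⟨24, by norm_num, fun α hα b g hb hg _ hlog => ?_⟩
  have hN := linftyNorm_nonneg b
  have hosc : ∀ c ∈ oscSet (fun x => α * Real.log (maxFn g x) + b x),
      c ≤ α * 24 + 2 * linftyNorm b := by
    rintro c ⟨s, t, hst, -, rfl⟩
    exact (lowOscLE_log_maxFn hg hlog hst).lowOsc_mul_add_le hst hα.le
      (hlog.integrableOn_isCompact isCompact_uIcc).intervalIntegrable hb
  refine ⟨⟨(hlog.smul α).add hb.locallyIntegrable, _, hosc⟩, ?_⟩
  exact Real.sSup_le (fun c hc => (hosc c hc).trans (by linarith)) (by positivity)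
end
end

section
/- For every positive integer r, the weight g_r(x) = (−log x)^r on the interval J = (0, 1/e) belongs to the Muckenhoupt class A1 relative to J, and its A1 constant equals the mean of g_r over J, i.e. A1(g_r) = e·∫_0^{1/e} (−log x)^r dx; in particular A1(g_r) < ∞ for every r. -/
open MeasureTheory Filter Set

noncomputable section

/-!
The weight `w x = (-log x) ^ r` has the explicit primitive `G x = x P(-log x)`, where
`P s = r! ∑_{k ≤ r} s ^ k / k!` is the polynomial with `P - P' = s ^ r`; moreover `G (0+) = 0`.
On `(0, e⁻¹)` the weight is decreasing, so its essential infimum on `[a, b]` is `w b`, and since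
`G x / x = P(-log x)` is decreasing as well, the mean of `w` over `[a, b]` is at most
`G b / b = P(-log b) ≤ P 1 · (-log b) ^ r` (as `-log b ≥ 1`). Hence every `A₁` ratio is at most
`P 1`; this bound is approached as `a → 0`, `b → e⁻¹`, and equals `e G(e⁻¹) = e ∫_0^{e⁻¹} w`.
-/

open Real Topology

def truncExpPoly : ℕ → ℝ → ℝ
  | 0, _ => 1
  | r + 1, s => (r + 1) * truncExpPoly r s + s ^ (r + 1)

def negLogPowPrimitive (r : ℕ) (x : ℝ) : ℝ := x * truncExpPoly r (-log x)

theorem hasDerivAt_truncExpPoly (r : ℕ) (s : ℝ) :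
    HasDerivAt (truncExpPoly r) (truncExpPoly r s - s ^ r) s := by
  induction r with
  | zero => simpa [truncExpPoly] using hasDerivAt_const s (1 : ℝ)
  | succ r ih =>
    refine ((ih.const_mul ((r : ℝ) + 1)).add (hasDerivAt_pow (r + 1) s)).congr_deriv ?_
    simp only [truncExpPoly, Nat.add_sub_cancel]
    push_cast
    ring

theorem truncExpPoly_nonneg (r : ℕ) {s : ℝ} (hs : 0 ≤ s) : 0 ≤ truncExpPoly r s := by
  induction r with
  | zero => simp [truncExpPoly]
  | succ r ih => simp only [truncExpPoly]; positivity

theorem truncExpPoly_monotoneOn (r : ℕ) : MonotoneOn (truncExpPoly r) (Ici 0) := by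
  intro s hs t _ hst
  induction r with
  | zero => simp [truncExpPoly]
  | succ r ih =>
    simp only [truncExpPoly]
    gcongr

theorem truncExpPoly_le_mul_pow (r : ℕ) {s : ℝ} (hs : 1 ≤ s) :
    truncExpPoly r s ≤ truncExpPoly r 1 * s ^ r := by
  induction r with
  | zero => simp [truncExpPoly]
  | succ r ih =>
    have h1 : 0 ≤ truncExpPoly r 1 := truncExpPoly_nonneg r zero_le_one
    have hpow : s ^ r ≤ s ^ (r + 1) := pow_le_pow_right₀ hs r.le_succ
    simp only [truncExpPoly, one_pow]
    calc (r + 1) * truncExpPoly r s + s ^ (r + 1)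
        ≤ (r + 1) * (truncExpPoly r 1 * s ^ (r + 1)) + s ^ (r + 1) := by
          gcongr; exact ih.trans (by gcongr)
      _ = ((r + 1) * truncExpPoly r 1 + 1) * s ^ (r + 1) := by ring

theorem tendsto_mul_neg_log_pow_nhdsGT_zero (k : ℕ) :
    Tendsto (fun x : ℝ => x * (-log x) ^ k) (𝓝[>] 0) (𝓝 0) := by
  have h := (tendsto_pow_mul_exp_neg_atTop_nhds_zero k).comp
    (tendsto_neg_atBot_atTop.comp tendsto_log_nhdsGT_zero)
  refine h.congr' ?_
  filter_upwards [self_mem_nhdsWithin] with x hx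
  simp only [Function.comp_apply, neg_neg, exp_log (mem_Ioi.mp hx)]
  ring

theorem hasDerivAt_negLogPowPrimitive (r : ℕ) {x : ℝ} (hx : 0 < x) :
    HasDerivAt (negLogPowPrimitive r) ((-log x) ^ r) x := by
  have hP := (hasDerivAt_truncExpPoly r (-log x)).comp x (hasDerivAt_log hx.ne').neg
  refine ((hasDerivAt_id x).mul hP).congr_deriv ?_
  show 1 * truncExpPoly r (-log x) + x * ((truncExpPoly r (-log x) - (-log x) ^ r) * -x⁻¹) = _
  linear_combination (-(truncExpPoly r (-log x) - (-log x) ^ r)) * mul_inv_cancel₀ hx.ne'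

theorem tendsto_negLogPowPrimitive_nhdsGT_zero (r : ℕ) :
    Tendsto (negLogPowPrimitive r) (𝓝[>] 0) (𝓝 0) := by
  induction r with
  | zero =>
    exact (tendsto_mul_neg_log_pow_nhdsGT_zero 0).congr fun x => by
      simp [negLogPowPrimitive, truncExpPoly]
  | succ r ih =>
    have h := (ih.const_mul ((r : ℝ) + 1)).add (tendsto_mul_neg_log_pow_nhdsGT_zero (r + 1))
    rw [mul_zero, add_zero] at h
    refine h.congr fun x => ?_
    simp only [negLogPowPrimitive, truncExpPoly]
    ring

theorem continuousOn_negLogPowPrimitive (r : ℕ) : ContinuousOn (negLogPowPrimitive r) (Ici 0) := by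
  intro x hx
  rcases (mem_Ici.mp hx).eq_or_lt with rfl | hx
  · rw [← continuousWithinAt_Ioi_iff_Ici, ContinuousWithinAt]
    simpa [negLogPowPrimitive] using tendsto_negLogPowPrimitive_nhdsGT_zero r
  · exact (hasDerivAt_negLogPowPrimitive r hx).continuousAt.continuousWithinAt

theorem integrableOn_neg_log_pow_Ioc (r : ℕ) {b : ℝ} (hb : b ≤ 1) :
    IntegrableOn (fun x => (-log x) ^ r) (Ioc 0 b) :=
  intervalIntegral.integrableOn_deriv_of_nonneg
    ((continuousOn_negLogPowPrimitive r).mono Icc_subset_Ici_self)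
    (fun _ hx => hasDerivAt_negLogPowPrimitive r hx.1)
    (fun _ hx => pow_nonneg (neg_nonneg.mpr (log_nonpos hx.1.le (hx.2.le.trans hb))) r)

theorem integral_neg_log_pow (r : ℕ) {a b : ℝ} (ha : 0 ≤ a) (hab : a ≤ b) (hb : b ≤ 1) :
    ∫ x in a..b, (-log x) ^ r = negLogPowPrimitive r b - negLogPowPrimitive r a :=
  intervalIntegral.integral_eq_sub_of_hasDerivAt_of_le hab
    ((continuousOn_negLogPowPrimitive r).mono (Icc_subset_Ici_iff hab |>.mpr ha))
    (fun _ hx => hasDerivAt_negLogPowPrimitive r (ha.trans_lt hx.1))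
    ((intervalIntegrable_iff_integrableOn_Ioc_of_le hab).mpr
      ((integrableOn_neg_log_pow_Ioc r hb).mono_set (Ioc_subset_Ioc_left ha)))

theorem essInfIcc_eq_of_isMinOn {f : ℝ → ℝ} {a b m : ℝ} (hab : a < b) (hm : m ∈ Icc a b)
    (hmin : IsMinOn f (Icc a b) m) (hfm : ContinuousWithinAt f (Icc a b) m) :
    essInfIcc f a b = f m := by
  rw [essInfIcc, essInf_eq_sSup]
  refine IsGreatest.csSup_eq ⟨?_, fun c hc => ?_⟩
  · show volume.restrict (Icc a b) {x | f x < f m} = 0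
    rw [Measure.restrict_apply' measurableSet_Icc]
    exact measure_mono_null (fun x ⟨hlt, hx⟩ => ((isMinOn_iff.mp hmin x hx).not_gt hlt).elim)
      measure_empty
  · have hc : volume ({x | f x < c} ∩ Icc a b) = 0 := by
      rw [← Measure.restrict_apply' measurableSet_Icc]; exact hc
    by_contra! hlt
    obtain ⟨U, hUo, hmU, hU⟩ := mem_nhdsWithin.mp (hfm (Iio_mem_nhds hlt))
    have hne : (U ∩ Ioo a b).Nonempty := by
      have hm' : m ∈ closure (Ioo a b) := by rwa [closure_Ioo hab.ne]
      exact mem_closure_iff.mp hm' U hUo hmU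
    refine ((hUo.inter isOpen_Ioo).measure_pos volume hne).ne' (measure_mono_null ?_ hc)
    exact fun x ⟨hxU, hx⟩ => ⟨hU ⟨hxU, Ioo_subset_Icc_self hx⟩, Ioo_subset_Icc_self hx⟩

theorem exp_neg_one_le_one : exp (-1) ≤ 1 := exp_le_one_iff.mpr (by norm_num)

theorem one_le_neg_log_of_le_exp_neg_one {x : ℝ} (hx : 0 < x) (hxe : x ≤ exp (-1)) :
    1 ≤ -log x := by
  linarith [(log_le_iff_le_exp hx).mpr hxe]

theorem essInfIcc_neg_log_pow (r : ℕ) {a b : ℝ} (ha : 0 < a) (hab : a < b) (hb : b ≤ 1) :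
    essInfIcc (fun x => (-log x) ^ r) a b = (-log b) ^ r :=
  essInfIcc_eq_of_isMinOn hab (right_mem_Icc.mpr hab.le)
    (isMinOn_iff.mpr fun _ hx =>
      pow_le_pow_left₀ (neg_nonneg.mpr (log_nonpos (ha.trans hab).le hb))
        (neg_le_neg (log_le_log (ha.trans_le hx.1) hx.2)) r)
    ((continuousAt_log (ha.trans hab).ne').neg.pow r).continuousWithinAt

theorem intAvg_neg_log_pow (r : ℕ) {a b : ℝ} (ha : 0 ≤ a) (hab : a < b) (hb : b ≤ 1) :
    intAvg (fun x => (-log x) ^ r) a b =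
      (negLogPowPrimitive r b - negLogPowPrimitive r a) / (b - a) := by
  rw [intAvg, integral_neg_log_pow r ha hab.le hb, inv_mul_eq_div]

theorem intAvg_neg_log_pow_le (r : ℕ) {a b : ℝ} (ha : 0 < a) (hab : a < b) (hb : b ≤ exp (-1)) :
    intAvg (fun x => (-log x) ^ r) a b ≤ truncExpPoly r 1 * (-log b) ^ r := by
  have hb0 : 0 < b := ha.trans hab
  have hb1 : 1 ≤ -log b := one_le_neg_log_of_le_exp_neg_one hb0 hb
  have hlog : -log b ≤ -log a := neg_le_neg (log_le_log ha hab.le)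
  have hP : truncExpPoly r (-log b) ≤ truncExpPoly r (-log a) :=
    truncExpPoly_monotoneOn r (mem_Ici.mpr (by linarith)) (mem_Ici.mpr (by linarith)) hlog
  calc intAvg (fun x => (-log x) ^ r) a b
      = (negLogPowPrimitive r b - negLogPowPrimitive r a) / (b - a) :=
        intAvg_neg_log_pow r ha.le hab (hb.trans exp_neg_one_le_one)
    _ ≤ negLogPowPrimitive r b / b := by
        rw [div_le_div_iff₀ (sub_pos.mpr hab) hb0]
        unfold negLogPowPrimitive
        nlinarith [mul_le_mul_of_nonneg_left hP (mul_nonneg ha.le hb0.le)]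
    _ = truncExpPoly r (-log b) := by rw [negLogPowPrimitive, mul_div_cancel_left₀ _ hb0.ne']
    _ ≤ truncExpPoly r 1 * (-log b) ^ r := truncExpPoly_le_mul_pow r hb1

theorem memA1On_neg_log_pow (r : ℕ) : MemA1On (fun x => (-log x) ^ r) (Ioo 0 (exp (-1))) := by
  refine ⟨?_, ae_of_all _ fun x hx => ?_, truncExpPoly r 1, fun a b hab hsub => ?_⟩
  · exact ((integrableOn_neg_log_pow_Ioc r exp_neg_one_le_one).mono_set
      Ioo_subset_Ioc_self).locallyIntegrableOn
  · exact pow_nonneg (zero_le_one.trans (one_le_neg_log_of_le_exp_neg_one hx.1 hx.2.le)) r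
  · have ha : 0 < a := (hsub (left_mem_Icc.mpr hab.le)).1
    have hb : b ≤ exp (-1) := (hsub (right_mem_Icc.mpr hab.le)).2.le
    rw [essInfIcc_neg_log_pow r ha hab (hb.trans exp_neg_one_le_one)]
    exact intAvg_neg_log_pow_le r ha hab hb

theorem exp_one_mul_setIntegral_neg_log_pow (r : ℕ) :
    exp 1 * ∫ x in Ioo 0 (exp (-1)), (-log x) ^ r = truncExpPoly r 1 := by
  rw [← integral_Ioc_eq_integral_Ioo, ← intervalIntegral.integral_of_le (exp_pos _).le,
    integral_neg_log_pow r le_rfl (exp_pos _).le exp_neg_one_le_one]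
  simp [negLogPowPrimitive, ← mul_assoc, ← exp_add]

theorem eventually_pos_lt_lt_nhdsGT_prod_nhdsLT {c : ℝ} (hc : 0 < c) :
    ∀ᶠ p : ℝ × ℝ in 𝓝[>] 0 ×ˢ 𝓝[<] c, 0 < p.1 ∧ p.1 < p.2 ∧ p.2 < c := by
  filter_upwards [prod_mem_prod (Ioo_mem_nhdsGT (half_pos hc)) (Ioo_mem_nhdsLT (half_lt_self hc))]
    with p ⟨⟨h0, h1⟩, h2, h3⟩
  exact ⟨h0, h1.trans h2, h3⟩

theorem tendsto_neg_log_pow_A1_ratio (r : ℕ) :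
    Tendsto (fun p : ℝ × ℝ => intAvg (fun x => (-log x) ^ r) p.1 p.2 /
        essInfIcc (fun x => (-log x) ^ r) p.1 p.2)
      (𝓝[>] 0 ×ˢ 𝓝[<] (exp (-1))) (𝓝 (truncExpPoly r 1)) := by
  set c := exp (-1)
  have ha : Tendsto (fun p : ℝ × ℝ => p.1) (𝓝[>] 0 ×ˢ 𝓝[<] c) (𝓝 0) :=
    tendsto_fst.mono_right nhdsWithin_le_nhds
  have hb : Tendsto (fun p : ℝ × ℝ => p.2) (𝓝[>] 0 ×ˢ 𝓝[<] c) (𝓝 c) :=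
    tendsto_snd.mono_right nhdsWithin_le_nhds
  have hGa := (tendsto_negLogPowPrimitive_nhdsGT_zero r).comp (tendsto_fst (g := 𝓝[<] c))
  have hGb := ((hasDerivAt_negLogPowPrimitive r (exp_pos _)).continuousAt.tendsto).comp hb
  have hw := ((continuousAt_log (exp_pos (-1)).ne').neg.pow r).tendsto.comp hb
  have h := ((hGb.sub hGa).div (hb.sub ha) (by rw [sub_zero]; exact (exp_pos _).ne')).div hw
    (by simp)
  convert h.congr' ?_ using 2
  · simp [c, negLogPowPrimitive]
  · filter_upwards [eventually_pos_lt_lt_nhdsGT_prod_nhdsLT (exp_pos (-1))] with p ⟨h0, h1, h2⟩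
    have hp1 : p.2 ≤ 1 := h2.le.trans exp_neg_one_le_one
    simp only [Function.comp_apply, Pi.div_apply]
    rw [intAvg_neg_log_pow r h0.le h1 hp1, essInfIcc_neg_log_pow r h0 h1 hp1]
    rfl

theorem sSup_neg_log_pow_A1_ratios (r : ℕ) :
    sSup {c : ℝ | ∃ a b : ℝ, 0 < a ∧ a < b ∧ b < exp (-1) ∧
        c = intAvg (fun x => (-log x) ^ r) a b / essInfIcc (fun x => (-log x) ^ r) a b} =
      truncExpPoly r 1 := by
  set S := {c : ℝ | ∃ a b : ℝ, 0 < a ∧ a < b ∧ b < exp (-1) ∧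
    c = intAvg (fun x => (-log x) ^ r) a b / essInfIcc (fun x => (-log x) ^ r) a b}
  have hmem : ∀ᶠ p : ℝ × ℝ in 𝓝[>] 0 ×ˢ 𝓝[<] (exp (-1)),
      intAvg (fun x => (-log x) ^ r) p.1 p.2 / essInfIcc (fun x => (-log x) ^ r) p.1 p.2 ∈ S :=
    (eventually_pos_lt_lt_nhdsGT_prod_nhdsLT (exp_pos (-1))).mono
      fun p ⟨h0, h1, h2⟩ => ⟨p.1, p.2, h0, h1, h2, rfl⟩
  refine IsLUB.csSup_eq ⟨?_, fun u hu => le_of_tendsto (tendsto_neg_log_pow_A1_ratio r)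
    (hmem.mono fun p hp => hu hp)⟩ (hmem.exists.elim fun _ hp => ⟨_, hp⟩)
  rintro _ ⟨a, b, ha, hab, hb, rfl⟩
  have hb1 : 1 ≤ -log b := one_le_neg_log_of_le_exp_neg_one (ha.trans hab) hb.le
  rw [essInfIcc_neg_log_pow r ha hab (hb.le.trans exp_neg_one_le_one),
    div_le_iff₀ (by positivity)]
  exact intAvg_neg_log_pow_le r ha hab hb.le

theorem neg_log_pow_memA1_general (r : ℕ) :
    MemA1On (fun x => (-Real.log x) ^ r) (Set.Ioo (0:ℝ) (Real.exp (-1))) ∧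
    sSup {c : ℝ | ∃ a b : ℝ, 0 < a ∧ a < b ∧ b < Real.exp (-1) ∧
        c = intAvg (fun x => (-Real.log x) ^ r) a b /
            essInfIcc (fun x => (-Real.log x) ^ r) a b}
      = Real.exp 1 * ∫ x in Set.Ioo (0:ℝ) (Real.exp (-1)), (-Real.log x) ^ r :=
  ⟨memA1On_neg_log_pow r,
    by rw [exp_one_mul_setIntegral_neg_log_pow, sSup_neg_log_pow_A1_ratios]⟩

/-- for every positive integer `r`, the weight `g_r(x) = (−log x)^r` on
`J = (0, 1/e)` belongs to `A₁` relative to `J`, with `A₁` constant equal to the mean of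
`g_r` over `J`, namely `e·∫_0^(1/e) (−log x)^r dx`. -/
theorem neg_log_pow_memA1 (r : ℕ) (hr : 0 < r) :
    MemA1On (fun x => (-Real.log x) ^ r) (Set.Ioo (0:ℝ) (Real.exp (-1))) ∧
    sSup {c : ℝ | ∃ a b : ℝ, 0 < a ∧ a < b ∧ b < Real.exp (-1) ∧
        c = intAvg (fun x => (-Real.log x) ^ r) a b /
            essInfIcc (fun x => (-Real.log x) ^ r) a b}
      = Real.exp 1 * ∫ x in Set.Ioo (0:ℝ) (Real.exp (-1)), (-Real.log x) ^ r :=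
  neg_log_pow_memA1_general r

end
end

section
/- The function f(x) = log(−log x) on J = (0, 1/e) is not essentially bounded on J, yet it lies in the closure of L∞(J) in the BLO seminorm: inf{‖f − h‖_{BLO(J)} : h ∈ L∞(J)} = 0. -/
open MeasureTheory Filter Set

noncomputable section

/-!
Near `0` the function `f x = log (-log x)` tends to `+∞`, so it is not essentially bounded.
Truncating it at height `t` leaves the excess `f - min f t = φ (-log x)` with
`φ u = (log u - t)⁺`, a monotone function with slope at most `e^{-t}`. On every interval `[a, b]`
the lower oscillation of `-log` is at most `1`, and composing with `φ` multiplies it by at most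
`e^{-t}`; hence `‖f - min f t‖_{BLO(J)} ≤ e^{-t}`, while `min f t` is bounded.
-/

section

open Real Topology

section LowOsc

variable {g : ℝ → ℝ} {a b : ℝ}

lemma ae_restrict_Icc_neBot (hab : a < b) : (ae (volume.restrict (Icc a b))).NeBot := by
  rw [ae_neBot, Ne, Measure.restrict_eq_zero, Real.volume_Icc, ENNReal.ofReal_eq_zero, not_le]
  exact sub_pos.2 hab

lemma le_essInfIcc_of_continuousOn {m : ℝ} (hab : a < b) (hg : ContinuousOn g (Icc a b))
    (hm : ∀ x ∈ Icc a b, m ≤ g x) : m ≤ essInfIcc g a b := by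
  have := ae_restrict_Icc_neBot hab
  obtain ⟨M, hM⟩ := isCompact_Icc.bddAbove_image hg
  have hgM : ∀ᵐ x ∂volume.restrict (Icc a b), g x ≤ M :=
    (ae_restrict_iff' measurableSet_Icc).2 (.of_forall fun x hx => hM (mem_image_of_mem g hx))
  exact le_liminf_of_le (IsBoundedUnder.isCoboundedUnder_ge ⟨M, hgM⟩)
    ((ae_restrict_iff' measurableSet_Icc).2 (.of_forall hm))

lemma essInfIcc_le_intAvg {m : ℝ} (hab : a < b) (hint : IntegrableOn g (Icc a b))
    (hm : ∀ᵐ x ∂volume.restrict (Icc a b), m ≤ g x) :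
    essInfIcc g a b ≤ intAvg g a b := by
  refine liminf_le_of_le ⟨m, hm⟩ fun c hc => ?_
  have hcg : ∫ _ in Icc a b, c ≤ ∫ x in Icc a b, g x :=
    integral_mono_ae (integrable_const c) hint hc
  rw [setIntegral_const, Real.volume_real_Icc_of_le hab.le, smul_eq_mul] at hcg
  rw [intAvg, intervalIntegral.integral_of_le hab.le, ← integral_Icc_eq_integral_Ioc,
    inv_mul_eq_div, le_div_iff₀ (sub_pos.2 hab)]
  linarith

lemma lowOsc_nonneg {C : ℝ} (hab : a < b)
    (hg : AEStronglyMeasurable g (volume.restrict (Icc a b)))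
    (hC : ∀ᵐ x ∂volume.restrict (Icc a b), |g x| ≤ C) : 0 ≤ lowOsc g a b :=
  sub_nonneg.2 <| essInfIcc_le_intAvg hab
    ⟨hg, .restrict_of_bounded C measure_Icc_lt_top hC⟩
    (hC.mono fun _ hx => neg_le_of_abs_le hx)

lemma bloNormOn_nonneg {Ω : Set ℝ} {C : ℝ} (hab : a < b) (hsub : Icc a b ⊆ Ω)
    (hg : AEStronglyMeasurable g (volume.restrict (Icc a b)))
    (hC : ∀ᵐ x ∂volume.restrict (Icc a b), |g x| ≤ C) : 0 ≤ bloNormOn g Ω :=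
  Real.sSup_nonneg' ⟨_, ⟨a, b, hab, hsub, rfl⟩, lowOsc_nonneg hab hg hC⟩

lemma intAvg_le_iff {c : ℝ} (hab : a < b) :
    intAvg g a b ≤ c ↔ ∫ x in a..b, g x ≤ (b - a) * c :=
  inv_mul_le_iff₀ (sub_pos.2 hab)

/-- The lower oscillation of `-log` over `[a, b]` is at most `1`. -/
lemma mul_log_sub_one_le_integral_log (ha : 0 < a) (hab : a ≤ b) :
    (b - a) * (log b - 1) ≤ ∫ x in a..b, log x := by
  have := mul_le_mul_of_nonneg_left (log_le_log ha hab) ha.le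
  rw [integral_log]
  linarith

lemma lowOsc_le_of_sub_le_mul_log_sub {L : ℝ} (ha : 0 < a) (hab : a < b) (hL : 0 ≤ L)
    (hg : ContinuousOn g (Icc a b)) (hgb : ∀ x ∈ Icc a b, g b ≤ g x)
    (hgL : ∀ x ∈ Icc a b, g x - g b ≤ L * (log b - log x)) : lowOsc g a b ≤ L := by
  have hmono : ∫ x in a..b, g x ≤ ∫ x in a..b, ((g b + L * log b) - L * log x) :=
    intervalIntegral.integral_mono_on hab.le (hg.intervalIntegrable_of_Icc hab.le)
      (intervalIntegrable_const.sub (intervalIntegral.intervalIntegrable_log'.const_mul L))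
      fun x hx => by linarith [hgL x hx]
  rw [intervalIntegral.integral_sub intervalIntegrable_const
    (intervalIntegral.intervalIntegrable_log'.const_mul L), intervalIntegral.integral_const,
    intervalIntegral.integral_const_mul, smul_eq_mul] at hmono
  have hlog := mul_le_mul_of_nonneg_left (mul_log_sub_one_le_integral_log ha hab.le) hL
  have havg : intAvg g a b ≤ g b + L := (intAvg_le_iff hab).2 (by linarith)
  have hinf : g b ≤ essInfIcc g a b := le_essInfIcc_of_continuousOn hab hg hgb
  rw [lowOsc]
  linarith

end LowOsc

section Truncation

variable {t u v : ℝ}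

lemma log_sub_min_log_le (hv : 0 < v) (hvu : v ≤ u) :
    log v - min (log v) t ≤ log u - min (log u) t := by
  have := log_le_log hv hvu
  simp only [min_def]
  split_ifs <;> linarith

/-- `u ↦ (log u - t)⁺` has slope at most `e^{-t}`: it is flat below `e^t` and `log` has slope
`1 / w ≤ e^{-t}` at every `w ≥ e^t`. -/
lemma log_sub_min_log_sub_le (hv : 0 < v) (hvu : v ≤ u) :
    (log u - min (log u) t) - (log v - min (log v) t) ≤ exp (-t) * (u - v) := by
  have hu : 0 < u := hv.trans_le hvu
  have hslope : ∀ w, exp t ≤ w → v ≤ w → log u - log w ≤ exp (-t) * (u - v) := by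
    intro w htw hvw
    have hw : 0 < w := (exp_pos t).trans_le htw
    calc log u - log w = log (u / w) := (log_div hu.ne' hw.ne').symm
      _ ≤ u / w - 1 := log_le_sub_one_of_pos (div_pos hu hw)
      _ = (u - w) / w := by field_simp
      _ ≤ (u - v) / exp t := div_le_div₀ (by linarith) (by linarith) (exp_pos t) htw
      _ = exp (-t) * (u - v) := by rw [exp_neg]; ring
  rcases le_or_gt (log u) t with hut | htu
  · have : 0 ≤ log v - min (log v) t := sub_nonneg.2 (min_le_left _ _)
    rw [min_eq_left hut, sub_self]
    nlinarith [exp_pos (-t)]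
  rw [min_eq_right htu.le]
  rcases le_or_gt t (log v) with htv | hvt
  · rw [min_eq_right htv]
    linarith [hslope v ((le_log_iff_exp_le hv).1 htv) le_rfl]
  · rw [min_eq_left hvt.le]
    linarith [hslope (exp t) le_rfl ((log_lt_iff_lt_exp hv).1 hvt).le, log_exp t]

end Truncation

lemma continuousOn_log_neg_log {a b : ℝ} (ha : 0 < a) (hb : b < 1) :
    ContinuousOn (fun x => log (-log x)) (Icc a b) := by
  have hpos : ∀ x ∈ Icc a b, 0 < x := fun x hx => ha.trans_le hx.1
  refine ((continuousOn_log.mono fun x hx => (hpos x hx).ne').neg).log fun x hx => ?_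
  exact (neg_pos.2 (log_neg (hpos x hx) (hx.2.trans_lt hb))).ne'

lemma lowOsc_log_neg_log_sub_min_le (t : ℝ) {a b : ℝ} (ha : 0 < a) (hab : a < b) (hb : b < 1) :
    lowOsc (fun x => log (-log x) - min (log (-log x)) t) a b ≤ exp (-t) := by
  have hf := continuousOn_log_neg_log ha hb
  have hlogb : 0 < -log b := neg_pos.2 (log_neg (ha.trans hab) hb)
  have hlogx : ∀ x ∈ Icc a b, -log b ≤ -log x := fun x hx =>
    neg_le_neg (log_le_log (ha.trans_le hx.1) hx.2)
  refine lowOsc_le_of_sub_le_mul_log_sub ha hab (exp_pos _).le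
    (hf.sub (hf.inf continuousOn_const)) (fun x hx => log_sub_min_log_le hlogb (hlogx x hx))
    fun x hx => ?_
  have := log_sub_min_log_sub_le (t := t) hlogb (hlogx x hx)
  linarith

lemma bloNormOn_log_neg_log_sub_min_le (t : ℝ) {Ω : Set ℝ} (hΩ : Ω ⊆ Ioo 0 1) :
    bloNormOn (fun x => log (-log x) - min (log (-log x)) t) Ω ≤ exp (-t) := by
  refine Real.sSup_le ?_ (exp_pos _).le
  rintro _ ⟨a, b, hab, hsub, rfl⟩
  exact lowOsc_log_neg_log_sub_min_le t (hΩ (hsub ⟨le_rfl, hab.le⟩)).1 hab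
    (hΩ (hsub ⟨hab.le, le_rfl⟩)).2

lemma measurable_log_neg_log : Measurable fun x => log (-log x) :=
  measurable_log.comp measurable_log.neg

lemma memLinftyOn_min_log_neg_log (t : ℝ) :
    MemLinftyOn (fun x => min (log (-log x)) t) (Ioo 0 (exp (-1))) := by
  refine ⟨(measurable_log_neg_log.min measurable_const).aestronglyMeasurable, |t|,
    .of_forall fun x hx => ?_⟩
  have hlogx : log x < -1 := by simpa using log_lt_log hx.1 hx.2
  have hf : 0 ≤ log (-log x) := log_nonneg (by linarith)
  rw [abs_le]
  exact ⟨le_min (by linarith [abs_nonneg t]) (neg_abs_le t),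
    (min_le_right _ _).trans (le_abs_self t)⟩

lemma bloNormOn_log_neg_log_sub_nonneg {h : ℝ → ℝ} (hh : MemLinftyOn h (Ioo 0 (exp (-1)))) :
    0 ≤ bloNormOn (fun x => log (-log x) - h x) (Ioo 0 (exp (-1))) := by
  obtain ⟨hmeas, M, hM⟩ := hh
  have hsub : Icc (exp (-3)) (exp (-2)) ⊆ Ioo 0 (exp (-1)) := fun x hx =>
    ⟨(exp_pos _).trans_le hx.1, hx.2.trans_lt (exp_lt_exp.2 (by norm_num))⟩
  obtain ⟨C, hC⟩ := isCompact_Icc.exists_bound_of_continuousOn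
    (continuousOn_log_neg_log (exp_pos (-3)) (exp_lt_one_iff.2 (by norm_num : (-2 : ℝ) < 0)))
  refine bloNormOn_nonneg (C := C + M) (exp_lt_exp.2 (by norm_num)) hsub
    (measurable_log_neg_log.aestronglyMeasurable.sub
      (hmeas.mono_measure (Measure.restrict_mono hsub le_rfl))) ?_
  filter_upwards [ae_restrict_of_ae hM, ae_restrict_mem measurableSet_Icc] with x hxM hx
  calc |log (-log x) - h x| ≤ |log (-log x)| + |h x| := abs_sub _ _
    _ ≤ C + M := add_le_add (hC x hx) (hxM (hsub hx))

lemma not_ae_bounded_of_tendsto_atTop {f : ℝ → ℝ} {a b : ℝ} (hab : a < b)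
    (hf : Tendsto f (𝓝[>] a) atTop) :
    ¬ ∃ M, ∀ᵐ x ∂volume, x ∈ Ioo a b → |f x| ≤ M := by
  rintro ⟨M, hM⟩
  obtain ⟨c, hac, hc⟩ := mem_nhdsGT_iff_exists_Ioo_subset.1 (hf.eventually_gt_atTop M)
  have hnull : volume (Ioo a (min b c)) = 0 := by
    refine measure_mono_null (fun x hx => ?_) (ae_iff.1 hM)
    intro hxM
    have hfx : M < f x := hc ⟨hx.1, hx.2.trans_le (min_le_right _ _)⟩
    have := hxM ⟨hx.1, hx.2.trans_le (min_le_left _ _)⟩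
    linarith [le_abs_self (f x)]
  rw [Real.volume_Ioo, ENNReal.ofReal_eq_zero] at hnull
  linarith [lt_min hab (show a < c from hac)]

lemma tendsto_log_neg_log_nhdsGT_zero : Tendsto (fun x => log (-log x)) (𝓝[>] 0) atTop :=
  tendsto_log_atTop.comp (tendsto_neg_atBot_atTop.comp tendsto_log_nhdsGT_zero)

end

/-- `f(x) = log(−log x)` on `J = (0, 1/e)` is not essentially bounded,
yet it lies in the closure of `L∞(J)` in the BLO(J) seminorm. -/
theorem log_neg_log_unbounded_in_closure :
    (¬ ∃ M : ℝ, ∀ᵐ x ∂volume, x ∈ Set.Ioo (0:ℝ) (Real.exp (-1)) →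
        |Real.log (-Real.log x)| ≤ M) ∧
    sInf {c : ℝ | ∃ h : ℝ → ℝ, MemLinftyOn h (Set.Ioo (0:ℝ) (Real.exp (-1))) ∧
        c = bloNormOn (fun x => Real.log (-Real.log x) - h x)
              (Set.Ioo (0:ℝ) (Real.exp (-1)))} = 0 := by
  refine ⟨not_ae_bounded_of_tendsto_atTop (Real.exp_pos _) tendsto_log_neg_log_nhdsGT_zero, ?_⟩
  set S := {c : ℝ | ∃ h : ℝ → ℝ, MemLinftyOn h (Set.Ioo (0:ℝ) (Real.exp (-1))) ∧
    c = bloNormOn (fun x => Real.log (-Real.log x) - h x) (Set.Ioo (0:ℝ) (Real.exp (-1)))}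
  have hS : ∀ c ∈ S, 0 ≤ c := by
    rintro _ ⟨h, hh, rfl⟩
    exact bloNormOn_log_neg_log_sub_nonneg hh
  have hJ : Set.Ioo (0:ℝ) (Real.exp (-1)) ⊆ Set.Ioo 0 1 :=
    Set.Ioo_subset_Ioo_right (Real.exp_lt_one_iff.2 (by norm_num)).le
  refine le_antisymm (ge_of_tendsto' Real.tendsto_exp_neg_atTop_nhds_zero fun t => ?_)
    (Real.sInf_nonneg hS)
  exact (csInf_le ⟨0, hS⟩ ⟨_, memLinftyOn_min_log_neg_log t, rfl⟩).trans
    (bloNormOn_log_neg_log_sub_min_le t hJ)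

end
end

section
/- For every positive integer r, the function t ↦ (e^t/t^r)·∫_0^{e^{−t}} (−log x)^r dx is non-increasing on [1, ∞). -/
open MeasureTheory Filter Set

noncomputable section

/-! Substituting `x = e^(-u)` turns the integral into the upper incomplete gamma integral
`∫_t^∞ e^(-u) u^r du = r! e^(-t) ∑_{k ≤ r} t^k / k!`, so the function equals
`r! ∑_{k ≤ r} t^(-(r-k)) / k!`, a sum of non-increasing functions on `(0, ∞)`. -/

open Real Finset
open scoped Nat Topology

theorem hasDerivAt_sum_range_pow_div_factorial (r : ℕ) (u : ℝ) :
    HasDerivAt (fun u : ℝ => ∑ k ∈ range (r + 1), u ^ k / k !)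
      ((∑ k ∈ range (r + 1), u ^ k / k !) - u ^ r / r !) u := by
  induction r with
  | zero => simpa using hasDerivAt_const u (1 : ℝ)
  | succ r ih =>
    simp_rw [sum_range_succ _ (r + 1)]
    refine (ih.add ((hasDerivAt_pow (r + 1) u).div_const ((r + 1)! : ℝ))).congr_deriv ?_
    rw [Nat.add_sub_cancel, Nat.factorial_succ, Nat.cast_mul]
    field_simp
    ring

theorem hasDerivAt_neg_exp_neg_mul_sum_range (r : ℕ) (u : ℝ) :
    HasDerivAt (fun u : ℝ => -exp (-u) * ∑ k ∈ range (r + 1), u ^ k / k !)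
      (exp (-u) * u ^ r / r !) u := by
  have hexp : HasDerivAt (fun u : ℝ => -exp (-u)) (exp (-u)) u := by
    simpa using ((hasDerivAt_neg u).exp).fun_neg
  refine (hexp.mul (hasDerivAt_sum_range_pow_div_factorial r u)).congr_deriv ?_
  ring

theorem tendsto_neg_exp_neg_mul_sum_range_atTop (r : ℕ) :
    Tendsto (fun u : ℝ => -exp (-u) * ∑ k ∈ range (r + 1), u ^ k / k !) atTop (𝓝 0) := by
  have h : Tendsto (fun u : ℝ => ∑ k ∈ range (r + 1), u ^ k * exp (-u) / k !) atTop (𝓝 0) := by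
    simpa using tendsto_finsetSum (range (r + 1)) fun k _ =>
      (tendsto_pow_mul_exp_neg_atTop_nhds_zero k).div_const (k ! : ℝ)
  convert h.neg using 2 with u
  · rw [neg_mul, mul_sum]
    exact congrArg _ (sum_congr rfl fun k _ => by ring)
  · simp

theorem integral_Ioi_exp_neg_mul_pow (r : ℕ) {t : ℝ} (ht : 0 ≤ t) :
    ∫ u in Ioi t, exp (-u) * u ^ r = r ! * exp (-t) * ∑ k ∈ range (r + 1), t ^ k / k ! := by
  have h := integral_Ioi_of_hasDerivAt_of_nonneg'
    (fun u _ => hasDerivAt_neg_exp_neg_mul_sum_range r u)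
    (fun u hu => by have : 0 < u := ht.trans_lt hu; positivity)
    (tendsto_neg_exp_neg_mul_sum_range_atTop r)
  rw [integral_div, div_eq_iff (by positivity)] at h
  rw [h]
  ring

theorem integral_Ioo_zero_exp_neg_eq_integral_Ioi {E : Type*} [NormedAddCommGroup E]
    [NormedSpace ℝ E] (f : ℝ → E) (t : ℝ) :
    ∫ x in Ioo 0 (exp (-t)), f x = ∫ u in Ioi t, exp (-u) • f (exp (-u)) := by
  have himage : (fun u => exp (-u)) '' Ioi t = Ioo 0 (exp (-t)) := by
    rw [← image_exp_Iio, ← image_neg_Ioi, image_image]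
  have hderiv : ∀ u ∈ Ioi t, HasDerivWithinAt (fun u => exp (-u)) (-exp (-u)) (Ioi t) u :=
    fun u _ => by simpa using (hasDerivAt_neg u).exp.hasDerivWithinAt
  have hinj : InjOn (fun u => exp (-u)) (Ioi t) := (exp_injective.comp neg_injective).injOn
  rw [← himage, integral_image_eq_integral_abs_deriv_smul measurableSet_Ioi hderiv hinj]
  simp_rw [abs_neg, abs_of_pos (exp_pos _)]

theorem integral_Ioo_zero_exp_neg_neg_log_pow (r : ℕ) {t : ℝ} (ht : 0 ≤ t) :
    ∫ x in Ioo 0 (exp (-t)), (-log x) ^ r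
      = r ! * exp (-t) * ∑ k ∈ range (r + 1), t ^ k / k ! := by
  rw [integral_Ioo_zero_exp_neg_eq_integral_Ioi, ← integral_Ioi_exp_neg_mul_pow r ht]
  simp_rw [log_exp, neg_neg, smul_eq_mul]

theorem exp_div_pow_mul_integral_Ioo_neg_log_pow (r : ℕ) {t : ℝ} (ht : 0 < t) :
    exp t / t ^ r * ∫ x in Ioo 0 (exp (-t)), (-log x) ^ r
      = r ! * ∑ k ∈ range (r + 1), (t ^ (r - k))⁻¹ / k ! := by
  rw [integral_Ioo_zero_exp_neg_neg_log_pow r ht.le, mul_sum, mul_sum, mul_sum]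
  refine sum_congr rfl fun k hk => ?_
  rw [pow_sub₀ t ht.ne' (mem_range_succ_iff.mp hk), exp_neg]
  field_simp

theorem antitoneOn_exp_div_pow_mul_integral_Ioo_neg_log_pow (r : ℕ) :
    AntitoneOn (fun t : ℝ => exp t / t ^ r * ∫ x in Ioo 0 (exp (-t)), (-log x) ^ r) (Ioi 0) := by
  intro s (hs : 0 < s) t ht hst
  simp only [exp_div_pow_mul_integral_Ioo_neg_log_pow r hs,
    exp_div_pow_mul_integral_Ioo_neg_log_pow r ht]
  gcongr

theorem exp_div_pow_mul_integral_antitone_general (r : ℕ) :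
    AntitoneOn (fun t : ℝ =>
        (Real.exp t / t ^ r) * ∫ x in Set.Ioo (0:ℝ) (Real.exp (-t)), (-Real.log x) ^ r)
      (Set.Ici (1:ℝ)) :=
  (antitoneOn_exp_div_pow_mul_integral_Ioo_neg_log_pow r).mono (Ici_subset_Ioi.2 one_pos)

/-- for every positive integer `r`, the function
`t ↦ (e^t/t^r)·∫_0^(e^(−t)) (−log x)^r dx` is non-increasing on `[1, ∞)`. -/
theorem exp_div_pow_mul_integral_antitone (r : ℕ) (hr : 0 < r) :
    AntitoneOn (fun t : ℝ =>
        (Real.exp t / t ^ r) * ∫ x in Set.Ioo (0:ℝ) (Real.exp (-t)), (-Real.log x) ^ r)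
      (Set.Ici (1:ℝ)) :=
  exp_div_pow_mul_integral_antitone_general r

end
end

section
/- For every k ∈ ℕ, the A1 constant of the weight w(x) = −log x relative to the interval J_k = (0, e^{−e^k}) equals (1 + e^k)/e^k, i.e. sup over compact intervals I ⊂ J_k of ((1/|I|)∫_I (−log x) dx)/(ess inf_I (−log x)) = (1 + e^k)/e^k. -/
open MeasureTheory Filter Set

noncomputable section

/-! On `[a, b] ⊂ (0, 1)` the weight `-log` is decreasing, so its essential infimum is `-log b`,
while its mean is at most its mean `1 - log b` over `[0, b]`, with equality in the limit `a → 0`.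
The ratio is therefore at most `1 + 1 / (-log b)`, which increases to `1 + e^(-k)` as
`b ↑ e^(-e^k)`. -/

open Real Topology

lemma essInfIcc_eq_of_antitoneOn {f : ℝ → ℝ} {a b : ℝ} (hab : a < b)
    (hf : AntitoneOn f (Icc a b)) (hfb : ContinuousWithinAt f (Icc a b) b) :
    essInfIcc f a b = f b := by
  have hmem : ∀ᵐ x ∂volume.restrict (Icc a b), x ∈ Icc a b :=
    ae_restrict_mem measurableSet_Icc
  have : (ae (volume.restrict (Icc a b))).NeBot := by
    rw [ae_neBot, Ne, Measure.restrict_eq_zero, Real.volume_Icc, ENNReal.ofReal_eq_zero, not_le]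
    exact sub_pos.2 hab
  have hlow : ∀ᵐ x ∂volume.restrict (Icc a b), f b ≤ f x :=
    hmem.mono fun x hx => hf hx (right_mem_Icc.2 hab.le) hx.2
  have hup : ∀ᵐ x ∂volume.restrict (Icc a b), f x ≤ f a :=
    hmem.mono fun x hx => hf (left_mem_Icc.2 hab.le) hx hx.1
  refine le_antisymm (le_of_forall_gt_imp_ge_of_dense fun y hy => ?_)
    (le_essInf_of_ae_le _ hlow (isCoboundedUnder_ge_of_eventually_le _ hup))
  by_contra! hyf
  have hgt : ∀ᵐ x, x ∈ Icc a b → y < f x :=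
    (ae_restrict_iff' measurableSet_Icc).1 (ae_lt_of_lt_essInf hyf ⟨f b, hlow⟩)
  obtain ⟨c, hc, hcy⟩ : ∃ c ∈ Ico a b, Ioc c b ⊆ {x | f x < y} :=
    ((TFAE_mem_nhdsLE hab _).out 1 3).1 (hfb.eventually (gt_mem_nhds hy))
  have hnull : volume (Ioc c b) = 0 := by
    refine measure_mono_null (fun x hx => ?_) (ae_iff.1 hgt)
    exact fun h => (hcy hx).not_gt (h ⟨hc.1.trans hx.1.le, hx.2⟩)
  rw [Real.volume_Ioc, ENNReal.ofReal_eq_zero, tsub_nonpos] at hnull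
  exact hc.2.not_ge hnull

lemma essInfIcc_neg_log {a b : ℝ} (ha : 0 < a) (hab : a < b) :
    essInfIcc (fun x => -log x) a b = -log b :=
  essInfIcc_eq_of_antitoneOn hab
    (fun _ hx _ _ hxy => neg_le_neg (log_le_log (ha.trans_le hx.1) hxy))
    (Real.continuousAt_log (ha.trans hab).ne').neg.continuousWithinAt

lemma intAvg_neg_log (a b : ℝ) :
    intAvg (fun x => -log x) a b
      = (b - a)⁻¹ * (b - a - b * log b + a * log a) := by
  rw [intAvg, intervalIntegral.integral_neg, integral_log]
  ring

lemma intAvg_neg_log_le {a b : ℝ} (ha : 0 < a) (hab : a < b) :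
    intAvg (fun x => -log x) a b ≤ 1 - log b := by
  have hlog : a * log a ≤ a * log b :=
    mul_le_mul_of_nonneg_left (log_le_log ha hab.le) ha.le
  rw [intAvg_neg_log, inv_mul_le_iff₀ (sub_pos.2 hab)]
  nlinarith

lemma tendsto_intAvg_neg_log {b : ℝ} (hb : b ≠ 0) :
    Tendsto (fun a => intAvg (fun x => -log x) a b) (𝓝 0) (𝓝 (1 - log b)) := by
  have hcont : ContinuousAt
      (fun a => (b - a)⁻¹ * (b - a - b * log b + a * log a)) 0 :=
    ((continuousAt_const.sub continuousAt_id).inv₀ (by simpa using hb)).mul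
      (((continuousAt_const.sub continuousAt_id).sub continuousAt_const).add
        Real.continuous_mul_log.continuousAt)
  have hval : (b - 0)⁻¹ * (b - 0 - b * log b + 0 * log 0) = 1 - log b := by
    field_simp
    ring
  simpa only [intAvg_neg_log, hval] using hcont.tendsto

lemma intAvg_div_essInfIcc_neg_log_le {a b : ℝ} (ha : 0 < a) (hab : a < b) (hb : b ≤ 1) :
    intAvg (fun x => -log x) a b / essInfIcc (fun x => -log x) a b
      ≤ (1 - log b) / -log b := by
  rw [essInfIcc_neg_log ha hab]
  exact div_le_div_of_nonneg_right (intAvg_neg_log_le ha hab)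
    (neg_nonneg.2 (log_nonpos (ha.trans hab).le hb))

lemma tendsto_intAvg_div_essInfIcc_neg_log {b : ℝ} (hb : 0 < b) :
    Tendsto (fun a => intAvg (fun x => -log x) a b / essInfIcc (fun x => -log x) a b)
      (𝓝[>] 0) (𝓝 ((1 - log b) / -log b)) := by
  refine ((tendsto_intAvg_neg_log hb.ne').div_const _).mono_left nhdsWithin_le_nhds |>.congr' ?_
  filter_upwards [Ioo_mem_nhdsGT hb] with a ha
  rw [essInfIcc_neg_log ha.1 ha.2]

/-- for every `k ∈ ℕ`, the `A₁` constant of `w(x) = −log x` relative to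
`J_k = (0, e^(−e^k))` equals `(1 + e^k)/e^k`. -/
theorem a1Const_neg_log_on_Jk (k : ℕ) :
    sSup {c : ℝ | ∃ a b : ℝ, 0 < a ∧ a < b ∧ b < Real.exp (-(Real.exp (k:ℝ))) ∧
        c = intAvg (fun x => -Real.log x) a b /
            essInfIcc (fun x => -Real.log x) a b}
      = (1 + Real.exp (k:ℝ)) / Real.exp (k:ℝ) := by
  set E := exp (k:ℝ)
  set β := exp (-E)
  have hE : 0 < E := exp_pos _
  have hβ : 0 < β := exp_pos _
  have hβ1 : β < 1 := exp_lt_one_iff.2 (neg_lt_zero.2 hE)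
  have hlogβ : log β = -E := log_exp _
  refine csSup_eq_of_forall_le_of_forall_lt_exists_gt
    ⟨_, β / 3, β / 2, by positivity, by linarith, by linarith, rfl⟩ ?_ fun y hy => ?_
  · rintro _ ⟨a, b, ha, hab, hbβ, rfl⟩
    have hlogb : E < -log b := by
      linarith [log_lt_log (ha.trans hab) hbβ]
    refine (intAvg_div_essInfIcc_neg_log_le ha hab (hbβ.trans hβ1).le).trans ?_
    rw [div_le_div_iff₀ (hE.trans hlogb) hE]
    nlinarith
  · have hratio : ContinuousAt (fun b => (1 - log b) / -log b) β :=
      (continuousAt_const.sub (Real.continuousAt_log hβ.ne')).div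
        (Real.continuousAt_log hβ.ne').neg (by simpa [hlogβ] using hE.ne')
    have hratioβ : (1 - log β) / -log β = (1 + E) / E := by
      rw [hlogβ, neg_neg, sub_neg_eq_add]
    obtain ⟨b, hyb, hb⟩ := ((hratio.tendsto.mono_left nhdsWithin_le_nhds).eventually
      (lt_mem_nhds (hratioβ ▸ hy))).and (Ioo_mem_nhdsLT hβ) |>.exists
    obtain ⟨a, hya, ha⟩ := ((tendsto_intAvg_div_essInfIcc_neg_log hb.1).eventually
      (lt_mem_nhds hyb)).and (Ioo_mem_nhdsGT hb.1) |>.exists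
    exact ⟨_, ⟨a, b, ha.1, ha.2, hb.2, rfl⟩, hya⟩

end
end

section
/- Let (a_n)_{n≥0} be a strictly decreasing sequence of positive reals converging to 0 and let f = Σ_{n=0}^∞ n·χ_{[a_{n+1},a_n)} on Ω = (0, a_0). Then for every k ∈ ℕ one has ‖f − T_k f‖_{BLO(Ω)} ≥ 1; in particular f is not approximable in BLO by its truncations. -/
open MeasureTheory Filter Set

noncomputable section

/-!
Since `f` takes the value `n` on `[a (n+1), a n)`, the function `f - T_k f = (f - k)⁺` equals `2`
on `[a (k+3), a (k+2))` and `1` on `[a (k+2), a (k+1))`. Over `[a (k+3), t]` with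
`a (k+2) < t < a (k+1)` its essential infimum is `1` and its mean exceeds `1` by
`(a (k+2) - a (k+3)) / (t - a (k+3))`, so the lower oscillation tends to the jump `1`
as `t ↓ a (k+2)`.
-/

open Topology

lemma tsum_mul_indicator_Ico_of_mem {a : ℕ → ℝ} (hanti : StrictAnti a) (c : ℕ → ℝ) {m : ℕ}
    {x : ℝ} (hx : x ∈ Ico (a (m + 1)) (a m)) :
    ∑' n : ℕ, c n * (Ico (a (n + 1)) (a n)).indicator (fun _ => (1 : ℝ)) x = c m := by
  rw [tsum_eq_single m fun n hn => ?_, indicator_of_mem hx, mul_one]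
  rw [indicator_of_notMem fun hxn => ?_, mul_zero]
  rcases hn.lt_or_gt with h | h
  · exact (hx.2.trans_le (hanti.antitone h)).not_ge hxn.1
  · exact (hxn.2.trans_le (hanti.antitone h)).not_ge hx.1

lemma sub_max_neg_min_of_le {k y : ℝ} (hk : 0 ≤ k) (hky : k ≤ y) :
    y - max (-k) (min k y) = y - k := by
  rw [min_eq_left hky, max_eq_right (by linarith)]

lemma essInf_eq_of_ae_le_of_measure_ne_zero {α : Type*} [MeasurableSpace α] {μ : Measure α}
    {g : α → ℝ} {v : ℝ} (hle : ∀ᵐ x ∂μ, v ≤ g x) (heq : μ {x | g x = v} ≠ 0) :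
    essInf g μ = v := by
  rw [essInf_eq_sSup]
  refine IsGreatest.csSup_eq ⟨?_, fun c hc => ?_⟩
  · show μ {x | g x < v} = 0
    simpa only [not_le, ae_iff] using hle
  · by_contra! hvc
    exact heq (measure_mono_null (fun x (hx : g x = v) => (hx.trans_lt hvc : g x < c)) hc)

lemma integral_two_step {g : ℝ → ℝ} {A B t u v : ℝ} (hAB : A ≤ B) (hBt : B ≤ t)
    (hu : EqOn g (fun _ => u) (Ioo A B)) (hv : EqOn g (fun _ => v) (Ioo B t)) :
    ∫ x in A..t, g x = u * (B - A) + v * (t - B) := by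
  have hiu : IntervalIntegrable g volume A B :=
    intervalIntegrable_const.congr_uIoo (uIoo_of_le hAB ▸ hu.symm)
  have hiv : IntervalIntegrable g volume B t :=
    intervalIntegrable_const.congr_uIoo (uIoo_of_le hBt ▸ hv.symm)
  rw [← intervalIntegral.integral_add_adjacent_intervals hiu hiv,
    intervalIntegral.integral_congr_Ioo_of_le hAB hu,
    intervalIntegral.integral_congr_Ioo_of_le hBt hv]
  simp only [intervalIntegral.integral_const, smul_eq_mul]
  ring

lemma lowOsc_two_step {g : ℝ → ℝ} {A B t u v : ℝ} (hAB : A < B) (hBt : B < t) (hvu : v ≤ u)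
    (hu : EqOn g (fun _ => u) (Ico A B)) (hv : EqOn g (fun _ => v) (Icc B t)) :
    lowOsc g A t = (u - v) * (B - A) / (t - A) := by
  have hint := integral_two_step hAB.le hBt.le (hu.mono Ioo_subset_Ico_self)
    (hv.mono Ioo_subset_Icc_self)
  have hinf : essInfIcc g A t = v := by
    refine essInf_eq_of_ae_le_of_measure_ne_zero
      (ae_restrict_of_forall_mem measurableSet_Icc fun x hx => ?_) ?_
    · rcases lt_or_ge x B with hxB | hxB
      · rw [hu ⟨hx.1, hxB⟩]; exact hvu
      · rw [hv ⟨hxB, hx.2⟩]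
    · rw [Measure.restrict_apply' measurableSet_Icc]
      refine ne_bot_of_le_ne_bot ?_ (measure_mono fun x hx => ⟨hv hx, hAB.le.trans hx.1, hx.2⟩)
      simpa [Real.volume_Icc] using hBt
  rw [lowOsc, intAvg, hint, hinf]
  field_simp [(sub_pos.2 (hAB.trans hBt)).ne']
  ring

lemma exists_lt_lowOsc_of_jump {g : ℝ → ℝ} {A B C u v η : ℝ} (hAB : A < B) (hBC : B < C)
    (hvu : v ≤ u) (hu : EqOn g (fun _ => u) (Ico A B)) (hv : EqOn g (fun _ => v) (Ico B C))
    (hη : η < u - v) : ∃ t, B < t ∧ t < C ∧ η < lowOsc g A t := by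
  have hcont : ContinuousAt (fun t => (u - v) * (B - A) / (t - A)) B :=
    continuousAt_const.div (continuousAt_id.sub continuousAt_const) (sub_pos.2 hAB).ne'
  have hlim : η < (u - v) * (B - A) / (B - A) := by
    rwa [mul_div_cancel_right₀ _ (sub_pos.2 hAB).ne']
  obtain ⟨t, ⟨hηt, htC⟩, hBt⟩ :=
    (((hcont.eventually (lt_mem_nhds hlim)).and (gt_mem_nhds hBC)).filter_mono
      nhdsWithin_le_nhds |>.and self_mem_nhdsWithin).exists (f := 𝓝[>] B)
  refine ⟨t, hBt, htC, ?_⟩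
  rwa [lowOsc_two_step hAB hBt hvu hu (hv.mono (Icc_subset_Ico_right htC))]

theorem jump_function_not_truncation_approx_general (a : ℕ → ℝ) (hpos : ∀ n, 0 < a n)
    (hanti : StrictAnti a)
    (k : ℕ) (δ : ℝ) (hδ : 0 < δ) :
    ∃ s t : ℝ, s < t ∧ Set.Icc s t ⊆ Set.Ioo 0 (a 0) ∧
      1 - δ < lowOsc (fun x =>
        (∑' n : ℕ, (n : ℝ) *
            Set.indicator (Set.Ico (a (n+1)) (a n)) (fun _ => (1:ℝ)) x) -
        max (-(k:ℝ)) (min (k:ℝ)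
          (∑' n : ℕ, (n : ℝ) *
              Set.indicator (Set.Ico (a (n+1)) (a n)) (fun _ => (1:ℝ)) x))) s t := by
  set g := fun x => (∑' n : ℕ, (n : ℝ) * (Ico (a (n+1)) (a n)).indicator (fun _ => (1:ℝ)) x) -
    max (-(k:ℝ)) (min (k:ℝ)
      (∑' n : ℕ, (n : ℝ) * (Ico (a (n+1)) (a n)).indicator (fun _ => (1:ℝ)) x))
  have hband (m : ℕ) (hm : k ≤ m) : EqOn g (fun _ => (m : ℝ) - k) (Ico (a (m+1)) (a m)) :=
    fun x hx => by
      simp only [g, tsum_mul_indicator_Ico_of_mem hanti _ hx]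
      exact sub_max_neg_min_of_le k.cast_nonneg (by exact_mod_cast hm)
  obtain ⟨t, hBt, htC, hosc⟩ := exists_lt_lowOsc_of_jump (hanti (by omega : k + 2 < k + 3))
    (hanti (by omega : k + 1 < k + 2)) (by push_cast; linarith) (hband (k + 2) (by omega))
    (hband (k + 1) (by omega)) (η := 1 - δ) (by push_cast; linarith)
  refine ⟨a (k + 3), t, (hanti (by omega)).trans hBt, fun x hx => ⟨?_, ?_⟩, hosc⟩
  · exact (hpos _).trans_le hx.1
  · exact hx.2.trans_lt (htC.trans_le (hanti.antitone (by omega)))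

/-- if `(a_n)` is a strictly decreasing positive sequence tending to `0`
and `f = Σ n·χ_{[a_(n+1), a_n)}` on `Ω = (0, a_0)`, then for every `k ∈ ℕ` one has
`‖f − T_k f‖_{BLO(Ω)} ≥ 1` (stated as: the supremum of lower oscillations over compact
subintervals of `Ω` exceeds `1 − δ` for every `δ > 0`). -/
theorem jump_function_not_truncation_approx (a : ℕ → ℝ) (hpos : ∀ n, 0 < a n)
    (hanti : StrictAnti a) (hlim : Filter.Tendsto a Filter.atTop (nhds 0))
    (k : ℕ) (δ : ℝ) (hδ : 0 < δ) :
    ∃ s t : ℝ, s < t ∧ Set.Icc s t ⊆ Set.Ioo 0 (a 0) ∧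
      1 - δ < lowOsc (fun x =>
        (∑' n : ℕ, (n : ℝ) *
            Set.indicator (Set.Ico (a (n+1)) (a n)) (fun _ => (1:ℝ)) x) -
        max (-(k:ℝ)) (min (k:ℝ)
          (∑' n : ℕ, (n : ℝ) *
              Set.indicator (Set.Ico (a (n+1)) (a n)) (fun _ => (1:ℝ)) x))) s t :=
  jump_function_not_truncation_approx_general a hpos hanti k δ hδ

end
end
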